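/- arXiv:2011.08874 — 9 statements merged into one kernel-verified Lean document; each statement's English description precedes it below -/
import Mathlib

section
/- If two nonnegative real sequences (a_n)_{n≥0} and (b_n)_{n≥0} are log-concave (a_n^2 ≥ a_{n-1}a_{n+1} and b_n^2 ≥ b_{n-1}b_{n+1} for all n ≥ 1) and have no internal zeros, then their convolution c_n = ∑_{j=0}^n a_j b_{n-j} is log-concave. -/
/-- For a nonnegative log-concave sequence with no internal zeros,
`f i * f (j+1) ≤ f (i+1) * f j` whenever `i ≤ j`. -/
lemma ratio_aux (f : ℕ → ℝ) (hf0 : ∀ n, 0 ≤ f n)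
    (hf : ∀ n, 1 ≤ n → f (n - 1) * f (n + 1) ≤ f n ^ 2)
    (hfz : ¬ ∃ i j k : ℕ, i < j ∧ j < k ∧ f i ≠ 0 ∧ f j = 0 ∧ f k ≠ 0) :
    ∀ j i, i ≤ j → f i * f (j + 1) ≤ f (i + 1) * f j := by
  intro j
  induction j with
  | zero =>
    intro i hi
    interval_cases i
    exact le_of_eq (mul_comm _ _)
  | succ j IH =>
    intro i hi
    rcases eq_or_lt_of_le hi with rfl | hlt
    · exact le_of_eq (mul_comm _ _)
    · have hij : i ≤ j := by omega
      by_cases hz : f (j + 1) = 0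
      · have h1 : f i = 0 ∨ f (j + 2) = 0 := by
          by_contra h
          push_neg at h
          exact hfz ⟨i, j + 1, j + 2, by omega, by omega, h.1, hz, h.2⟩
        rcases h1 with h1 | h1 <;> simp [h1, hz]
      · have hpos : 0 < f (j + 1) := (hf0 _).lt_of_ne (Ne.symm hz)
        have hIH := IH i hij
        have hlc : f j * f (j + 2) ≤ f (j + 1) ^ 2 := by
          have := hf (j + 1) (by omega)
          simpa using this
        nlinarith [mul_le_mul_of_nonneg_right hIH (hf0 (j + 2)),
          mul_le_mul_of_nonneg_left hlc (hf0 (i + 1)), hf0 i, hf0 (j + 2)]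

theorem logConcave_convolution (a b : ℕ → ℝ)
    (ha0 : ∀ n, 0 ≤ a n) (hb0 : ∀ n, 0 ≤ b n)
    (ha : ∀ n, 1 ≤ n → a (n - 1) * a (n + 1) ≤ a n ^ 2)
    (hb : ∀ n, 1 ≤ n → b (n - 1) * b (n + 1) ≤ b n ^ 2)
    (haz : ¬ ∃ i j k : ℕ, i < j ∧ j < k ∧ a i ≠ 0 ∧ a j = 0 ∧ a k ≠ 0)
    (hbz : ¬ ∃ i j k : ℕ, i < j ∧ j < k ∧ b i ≠ 0 ∧ b j = 0 ∧ b k ≠ 0)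
    (c : ℕ → ℝ) (hc : ∀ n, c n = ∑ j ∈ Finset.range (n + 1), a j * b (n - j)) :
    ∀ n, 1 ≤ n → c (n - 1) * c (n + 1) ≤ c n ^ 2 := by
  have hra := ratio_aux a ha0 ha haz
  have hrb := ratio_aux b hb0 hb hbz
  intro n hn
  obtain ⟨m, rfl⟩ : ∃ m, n = m + 1 := ⟨n - 1, by omega⟩
  set T := Finset.range (m + 3) with hT
  set y : ℕ → ℝ := fun r => if r = 0 then 0 else a (r - 1) with hy
  set u : ℕ → ℝ := fun r => if r ≤ m + 1 then b (m + 1 - r) else 0 with hu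
  set v : ℕ → ℝ := fun r => b (m + 2 - r) with hv
  have hy0 : ∀ r, 0 ≤ y r := by
    intro r; simp only [hy]; split; · exact le_rfl
    · exact ha0 _
  have hu0 : ∀ r, 0 ≤ u r := by
    intro r; simp only [hu]; split; · exact hb0 _
    · exact le_rfl
  have hv0 : ∀ r, 0 ≤ v r := fun r => hb0 _
  -- the four sums
  have hSxu : ∑ r ∈ T, a r * u r = c (m + 1) := by
    rw [hc (m + 1), hT, Finset.sum_range_succ]
    have : u (m + 2) = 0 := by simp [hu]
    rw [this, mul_zero, add_zero]
    refine Finset.sum_congr rfl fun r hr => ?_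
    have : r ≤ m + 1 := by simpa [Nat.lt_succ_iff] using hr
    simp [hu, this]
  have hSxv : ∑ r ∈ T, a r * v r = c (m + 2) := by
    rw [hc (m + 2)]
  have hSyu : ∑ r ∈ T, y r * u r = c m := by
    rw [hc m, hT]
    rw [Finset.sum_range_succ' (fun r => y r * u r) (m + 2)]
    have h0 : y 0 * u 0 = 0 := by simp [hy]
    rw [h0, add_zero, Finset.sum_range_succ]
    have hlast : y (m + 2) * u (m + 2) = 0 := by simp [hu]
    rw [hlast, add_zero]
    refine Finset.sum_congr rfl fun r hr => ?_
    have hr' : r ≤ m := by simpa [Nat.lt_succ_iff] using hr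
    have h1 : y (r + 1) = a r := by simp [hy]
    have h2 : u (r + 1) = b (m - r) := by
      have : r + 1 ≤ m + 1 := by omega
      simp only [hu, if_pos this]
      congr 1
      omega
    rw [h1, h2]
  have hSyv : ∑ r ∈ T, y r * v r = c (m + 1) := by
    rw [hc (m + 1), hT]
    rw [Finset.sum_range_succ' (fun r => y r * v r) (m + 2)]
    have h0 : y 0 * v 0 = 0 := by simp [hy]
    rw [h0, add_zero]
    refine Finset.sum_congr rfl fun r hr => ?_
    have h1 : y (r + 1) = a r := by simp [hy]
    have h2 : v (r + 1) = b (m + 1 - r) := by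
      simp only [hv]
      congr 1
      omega
    rw [h1, h2]
  -- nonnegativity of each Lagrange term
  have hfac1 : ∀ r s, r < s → 0 ≤ a r * y s - a s * y r := by
    intro r s hrs
    rcases Nat.eq_zero_or_pos r with rfl | hr
    · have : y 0 = 0 := by simp [hy]
      rw [this, mul_zero, sub_zero]
      exact mul_nonneg (ha0 0) (hy0 s)
    · have hs : 1 ≤ s := by omega
      have h1 : y s = a (s - 1) := by simp [hy]; omega
      have h2 : y r = a (r - 1) := by simp [hy]; omega
      rw [h1, h2, sub_nonneg]
      have := hra (s - 1) (r - 1) (by omega)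
      have e1 : r - 1 + 1 = r := by omega
      have e2 : s - 1 + 1 = s := by omega
      rw [e1, e2] at this
      linarith [this]
  have hfac2 : ∀ r s, r < s → s ≤ m + 2 → 0 ≤ u r * v s - u s * v r := by
    intro r s hrs hs
    rcases eq_or_lt_of_le hs with rfl | hs'
    · have : u (m + 2) = 0 := by simp [hu]
      rw [this, zero_mul, sub_zero]
      exact mul_nonneg (hu0 r) (hv0 _)
    · have hs1 : s ≤ m + 1 := by omega
      have hr1 : r ≤ m + 1 := by omega
      have h1 : u r = b (m + 1 - r) := by simp [hu, hr1]
      have h2 : u s = b (m + 1 - s) := by simp [hu, hs1]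
      rw [h1, h2, sub_nonneg]
      have := hrb (m + 1 - r) (m + 1 - s) (by omega)
      have e1 : m + 1 - s + 1 = m + 2 - s := by omega
      have e2 : m + 1 - r + 1 = m + 2 - r := by omega
      rw [e1, e2] at this
      simp only [hv]
      nlinarith [this]
  have hterm : ∀ r ∈ T, ∀ s ∈ T, 0 ≤ (a r * y s - a s * y r) * (u r * v s - u s * v r) := by
    intro r hr s hs
    rcases lt_trichotomy r s with h | h | h
    · exact mul_nonneg (hfac1 r s h) (hfac2 r s h (by simpa [hT, Nat.lt_succ_iff] using hs))
    · subst h; simp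
    · have h1 := hfac1 s r h
      have h2 := hfac2 s r h (by simpa [hT, Nat.lt_succ_iff] using hr)
      have e1 : a r * y s - a s * y r = -(a s * y r - a r * y s) := by ring
      have e2 : u r * v s - u s * v r = -(u s * v r - u r * v s) := by ring
      rw [e1, e2, neg_mul_neg]
      exact mul_nonneg h1 h2
  have hsum : 0 ≤ ∑ r ∈ T, ∑ s ∈ T, (a r * y s - a s * y r) * (u r * v s - u s * v r) :=
    Finset.sum_nonneg fun r hr => Finset.sum_nonneg fun s hs => hterm r hr s hs
  -- Lagrange expansion
  have hexpand : ∑ r ∈ T, ∑ s ∈ T, (a r * y s - a s * y r) * (u r * v s - u s * v r)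
      = 2 * ((∑ r ∈ T, a r * u r) * (∑ r ∈ T, y r * v r)
        - (∑ r ∈ T, a r * v r) * (∑ r ∈ T, y r * u r)) := by
    have h1 : ∀ r, ∑ s ∈ T, (a r * y s - a s * y r) * (u r * v s - u s * v r)
        = (a r * u r) * (∑ s ∈ T, y s * v s) - (a r * v r) * (∑ s ∈ T, y s * u s)
          - (y r * u r) * (∑ s ∈ T, a s * v s) + (y r * v r) * (∑ s ∈ T, a s * u s) := by
      intro r
      rw [Finset.mul_sum, Finset.mul_sum, Finset.mul_sum, Finset.mul_sum,
        ← Finset.sum_sub_distrib, ← Finset.sum_sub_distrib, ← Finset.sum_add_distrib]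
      exact Finset.sum_congr rfl fun s _ => by ring
    rw [Finset.sum_congr rfl fun r _ => h1 r, Finset.sum_add_distrib,
      Finset.sum_sub_distrib, Finset.sum_sub_distrib,
      ← Finset.sum_mul, ← Finset.sum_mul, ← Finset.sum_mul, ← Finset.sum_mul]
    ring
  rw [hSxu, hSxv, hSyu, hSyv] at hexpand
  have : (m + 1) - 1 = m := by omega
  rw [this, pow_two]
  linarith [hsum, hexpand.symm ▸ hsum]
end

section
/- For every real κ > -1/2 and every real x with 0 ≤ x < 1, the modified Bessel function satisfies I_κ(x) ≤ 2^{1-κ} x^κ / Γ(κ+1). -/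
open Real MeasureTheory


lemma realBeta {a b : ℝ} (ha : 0 < a) (hb : 0 < b) :
    Real.Gamma a * Real.Gamma b =
      Real.Gamma (a + b) * ∫ u in (0:ℝ)..1, u ^ (a-1) * (1-u) ^ (b-1) := by
  have key := Complex.Gamma_mul_Gamma_eq_betaIntegral (s := (a:ℂ)) (t := (b:ℂ))
    (by simpa using ha) (by simpa using hb)
  have hbeta : Complex.betaIntegral (a:ℂ) (b:ℂ) =
      ((∫ u in (0:ℝ)..1, u ^ (a-1) * (1-u) ^ (b-1) : ℝ) : ℂ) := by
    rw [Complex.betaIntegral, ← intervalIntegral.integral_ofReal]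
    apply intervalIntegral.integral_congr
    intro x hx
    rw [Set.uIcc_of_le (by norm_num : (0:ℝ) ≤ 1)] at hx
    push_cast
    rw [Complex.ofReal_cpow hx.1, Complex.ofReal_cpow (by linarith [hx.2] : (0:ℝ) ≤ 1 - x)]
    push_cast
    ring
  rw [hbeta, ← Complex.ofReal_add, Complex.Gamma_ofReal, Complex.Gamma_ofReal,
    Complex.Gamma_ofReal, ← Complex.ofReal_mul, ← Complex.ofReal_mul] at key
  exact_mod_cast key


lemma w_intble {p : ℝ} (hp : -1 < p) :
    IntervalIntegrable (fun t : ℝ => (1 - t ^ 2) ^ p) volume (-1) 1 := by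
  have hg1 : IntervalIntegrable (fun t : ℝ => (1 - t) ^ p * (1 + t) ^ p) volume 0 1 := by
    have h1 : IntervalIntegrable (fun t : ℝ => (1 - t) ^ p) volume 0 1 := by
      simpa using (intervalIntegral.intervalIntegrable_rpow' (a := 1) (b := 0) hp).comp_sub_left 1
    exact h1.mul_continuousOn <| ContinuousOn.rpow_const
      (by fun_prop) (fun x hx => by
        rw [Set.uIcc_of_le (by norm_num : (0:ℝ) ≤ 1)] at hx
        exact Or.inl (by nlinarith [hx.1]))
  have hg2 : IntervalIntegrable (fun t : ℝ => (1 - t) ^ p * (1 + t) ^ p) volume (-1) 0 := by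
    have h1 : IntervalIntegrable (fun t : ℝ => (1 + t) ^ p) volume (-1) 0 := by
      simpa [add_comm] using (intervalIntegral.intervalIntegrable_rpow' (a := 0) (b := 1) hp).comp_add_right 1
    exact (h1.continuousOn_mul <| ContinuousOn.rpow_const
      (by fun_prop) (fun x hx => by
        rw [Set.uIcc_of_le (by norm_num : (-1:ℝ) ≤ 0)] at hx
        exact Or.inl (by nlinarith [hx.2])))
  have hg : IntervalIntegrable (fun t : ℝ => (1 - t) ^ p * (1 + t) ^ p) volume (-1) 1 :=
    hg2.trans hg1
  rw [intervalIntegrable_iff_integrableOn_Ioc_of_le (by norm_num)] at hg ⊢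
  apply hg.congr_fun ?_ measurableSet_Ioc
  intro t ht
  show (1 - t) ^ p * (1 + t) ^ p = (1 - t ^ 2) ^ p
  rw [← Real.mul_rpow (by linarith [ht.2]) (by linarith [ht.1])]
  ring_nf


lemma w_integral {κ : ℝ} (hκ : -1/2 < κ) :
    (∫ t in (-1:ℝ)..1, (1 - t^2) ^ (κ - 1/2))
      = Real.sqrt π * Real.Gamma (κ+1/2) / Real.Gamma (κ+1) := by
  have ha : 0 < κ + 1/2 := by linarith
  have hB := realBeta ha ha
  have hdup := Real.Gamma_mul_Gamma_add_half (κ + 1/2)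
  have hsub := intervalIntegral.smul_integral_comp_mul_add
    (a := -1) (b := 1) (fun u : ℝ => u ^ (κ + 1/2 - 1) * (1-u) ^ (κ + 1/2 - 1)) (1/2) (1/2)
  norm_num at hsub
  have hcong : (∫ t in (-1:ℝ)..1,
        (1/2*t+1/2) ^ (κ + 1/2 - 1) * (1-(1/2*t+1/2)) ^ (κ + 1/2 - 1))
      = (∫ t in (-1:ℝ)..1, (1 - t^2) ^ (κ - 1/2)) / (4:ℝ) ^ (κ - 1/2) := by
    rw [← intervalIntegral.integral_div]
    apply intervalIntegral.integral_congr
    intro t ht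
    rw [Set.uIcc_of_le (by norm_num : (-1:ℝ) ≤ 1)] at ht
    have h1 : (0:ℝ) ≤ 1/2*t+1/2 := by linarith [ht.1]
    have h2 : (0:ℝ) ≤ 1 - (1/2*t+1/2) := by linarith [ht.2]
    show (1/2*t+1/2) ^ (κ + 1/2 - 1) * (1-(1/2*t+1/2)) ^ (κ + 1/2 - 1)
        = (1 - t^2) ^ (κ - 1/2) / (4:ℝ) ^ (κ - 1/2)
    rw [← Real.mul_rpow h1 h2,
      ← Real.div_rpow (by nlinarith [ht.1, ht.2]) (by norm_num : (0:ℝ) ≤ 4),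
      show κ + 1/2 - 1 = κ - 1/2 from by ring]
    congr 1
    ring
  rw [hcong] at hsub
  -- positivity facts
  have hG : 0 < Real.Gamma (κ + 1/2) := Real.Gamma_pos_of_pos ha
  have hG1 : 0 < Real.Gamma (κ + 1) := Real.Gamma_pos_of_pos (by linarith)
  have hΓ2 : 0 < Real.Gamma (κ + 1/2 + (κ + 1/2)) := Real.Gamma_pos_of_pos (by linarith)
  have hdup' : Real.Gamma (κ + 1/2) * Real.Gamma (κ + 1)
      = Real.Gamma (κ + 1/2 + (κ + 1/2)) * (2:ℝ) ^ (-(2*κ)) * Real.sqrt π := by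
    rw [show κ + 1 = κ + 1/2 + 1/2 by ring, hdup]
    ring_nf
  have hpow : 2 * (4:ℝ) ^ (κ - 1/2) * (2:ℝ) ^ (-(2*κ)) = 1 := by
    rw [show (4:ℝ) = (2:ℝ) ^ (2:ℝ) by norm_num [Real.rpow_natCast],
      ← Real.rpow_mul (by norm_num), mul_assoc, ← Real.rpow_add two_pos,
      show 2*(κ-1/2) + -(2*κ) = -1 from by ring]
    norm_num [Real.rpow_neg_one]
  have h4 : (0:ℝ) < (4:ℝ) ^ (κ - 1/2) := Real.rpow_pos_of_pos (by norm_num) _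
  have h2 : (0:ℝ) < (2:ℝ) ^ (-(2*κ)) := Real.rpow_pos_of_pos (by norm_num) _
  rw [← hsub] at hB
  have e1 : (∫ t in (-1:ℝ)..1, (1 - t^2) ^ (κ - 1/2))
      = 2 * (4:ℝ) ^ (κ - 1/2) * (Real.Gamma (κ+1/2) * Real.Gamma (κ+1/2))
        / Real.Gamma (κ + 1/2 + (κ + 1/2)) := by
    rw [eq_div_iff hΓ2.ne', hB]
    field_simp
  rw [e1, div_eq_div_iff hΓ2.ne' hG1.ne']
  linear_combination (2 * (4:ℝ) ^ (κ - 1/2) * Real.Gamma (κ+1/2)) * hdup'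
    + (Real.sqrt π * Real.Gamma (κ+1/2) * Real.Gamma (κ + 1/2 + (κ + 1/2))) * hpow

/-- The modified Bessel function of the first kind, via its integral
representation valid for `κ > -1/2`. -/
noncomputable def besselI (κ x : ℝ) : ℝ :=
  (x / 2) ^ κ / (Real.Gamma (κ + 1 / 2) * Real.sqrt π) *
    ∫ t in (-1 : ℝ)..1, (1 - t ^ 2) ^ (κ - 1 / 2) * Real.exp (x * t)


theorem besselI_le_of_lt_one (κ x : ℝ) (hκ : -1/2 < κ) (hx0 : 0 ≤ x) (hx1 : x < 1) :
    besselI κ x ≤ 2 ^ (1 - κ) * x ^ κ / Real.Gamma (κ + 1) := by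
  have hp : (-1:ℝ) < κ - 1/2 := by linarith
  have hG : 0 < Real.Gamma (κ + 1/2) := Real.Gamma_pos_of_pos (by linarith)
  have hG1 : 0 < Real.Gamma (κ + 1) := Real.Gamma_pos_of_pos (by linarith)
  have hw := w_intble hp
  have hI1 : IntervalIntegrable
      (fun t : ℝ => (1 - t ^ 2) ^ (κ - 1/2) * Real.exp (x * t)) volume (-1) 1 :=
    hw.mul_continuousOn ((Real.continuous_exp.comp (continuous_const.mul continuous_id)).continuousOn)
  have hI2 : IntervalIntegrable
      (fun t : ℝ => (1 - t ^ 2) ^ (κ - 1/2) * Real.exp (-(x * t))) volume (-1) 1 :=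
    hw.mul_continuousOn ((Real.continuous_exp.comp
      (continuous_const.mul continuous_id).neg).continuousOn)
  have hsymm : (∫ t in (-1:ℝ)..1, (1 - t ^ 2) ^ (κ - 1/2) * Real.exp (x * t))
      = ∫ t in (-1:ℝ)..1, (1 - t ^ 2) ^ (κ - 1/2) * Real.exp (-(x * t)) := by
    have h := intervalIntegral.integral_comp_neg
      (fun t : ℝ => (1 - t ^ 2) ^ (κ - 1/2) * Real.exp (x * t)) (a := -1) (b := 1)
    simp only [neg_sq, mul_neg, neg_neg] at h
    rw [← h]
  have hsum : 2 * (∫ t in (-1:ℝ)..1, (1 - t ^ 2) ^ (κ - 1/2) * Real.exp (x * t))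
      = ∫ t in (-1:ℝ)..1, ((1 - t ^ 2) ^ (κ - 1/2) * Real.exp (x * t)
          + (1 - t ^ 2) ^ (κ - 1/2) * Real.exp (-(x * t))) := by
    rw [intervalIntegral.integral_add hI1 hI2, ← hsymm]; ring
  have hmono : (∫ t in (-1:ℝ)..1, ((1 - t ^ 2) ^ (κ - 1/2) * Real.exp (x * t)
          + (1 - t ^ 2) ^ (κ - 1/2) * Real.exp (-(x * t))))
      ≤ ∫ t in (-1:ℝ)..1, 4 * (1 - t ^ 2) ^ (κ - 1/2) := by
    apply intervalIntegral.integral_mono_on (by norm_num) (hI1.add hI2) (hw.const_mul 4)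
    intro t ht
    obtain ⟨ht1, ht2⟩ := ht
    have hwn : (0:ℝ) ≤ (1 - t ^ 2) ^ (κ - 1/2) :=
      Real.rpow_nonneg (by nlinarith) _
    have he : Real.exp (x * t) + Real.exp (-(x * t)) ≤ 4 := by
      have h3 : Real.exp 1 ≤ 3 := by linarith [Real.exp_one_lt_d9]
      rcases le_or_gt 0 (x * t) with h | h
      · have : Real.exp (x * t) ≤ Real.exp 1 := Real.exp_le_exp.2 (by nlinarith)
        have h1 : Real.exp (-(x * t)) ≤ 1 := Real.exp_le_one_iff.2 (by linarith)
        linarith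
      · have : Real.exp (-(x * t)) ≤ Real.exp 1 := Real.exp_le_exp.2 (by nlinarith)
        have h1 : Real.exp (x * t) ≤ 1 := Real.exp_le_one_iff.2 (by linarith)
        linarith
    calc (1 - t ^ 2) ^ (κ - 1/2) * Real.exp (x * t)
          + (1 - t ^ 2) ^ (κ - 1/2) * Real.exp (-(x * t))
        = (1 - t ^ 2) ^ (κ - 1/2) * (Real.exp (x * t) + Real.exp (-(x * t))) := by ring
      _ ≤ (1 - t ^ 2) ^ (κ - 1/2) * 4 := mul_le_mul_of_nonneg_left he hwn
      _ = 4 * (1 - t ^ 2) ^ (κ - 1/2) := by ring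
  have hJ : (∫ t in (-1:ℝ)..1, (1 - t ^ 2) ^ (κ - 1/2) * Real.exp (x * t))
      ≤ 2 * (Real.sqrt π * Real.Gamma (κ+1/2) / Real.Gamma (κ+1)) := by
    rw [intervalIntegral.integral_const_mul, w_integral hκ] at hmono
    linarith
  have hC : 0 ≤ (x / 2) ^ κ / (Real.Gamma (κ + 1/2) * Real.sqrt π) :=
    div_nonneg (Real.rpow_nonneg (by linarith) _)
      (mul_nonneg hG.le (Real.sqrt_nonneg _))
  have hfin : (x / 2) ^ κ / (Real.Gamma (κ + 1/2) * Real.sqrt π)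
        * (2 * (Real.sqrt π * Real.Gamma (κ+1/2) / Real.Gamma (κ+1)))
      = 2 ^ (1 - κ) * x ^ κ / Real.Gamma (κ + 1) := by
    have hsp : (0:ℝ) < Real.sqrt π := Real.sqrt_pos.2 Real.pi_pos
    have hdiv : (x / 2) ^ κ = x ^ κ / (2:ℝ) ^ κ := Real.div_rpow hx0 (by norm_num : (0:ℝ) ≤ 2) κ
    have h2 : (2:ℝ) ^ (1 - κ) = 2 / (2:ℝ) ^ κ := by
      rw [Real.rpow_sub two_pos, Real.rpow_one]
    have h2κ : (0:ℝ) < (2:ℝ) ^ κ := Real.rpow_pos_of_pos two_pos _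
    rw [hdiv, h2,
      show (2:ℝ) * (Real.sqrt π * Real.Gamma (κ+1/2) / Real.Gamma (κ+1))
        = (2 * Real.sqrt π * Real.Gamma (κ+1/2)) / Real.Gamma (κ+1) from by ring,
      div_mul_div_comm,
      div_eq_div_iff (mul_ne_zero (mul_ne_zero hG.ne' hsp.ne') hG1.ne') hG1.ne']
    ring
  calc besselI κ x
      ≤ (x / 2) ^ κ / (Real.Gamma (κ + 1/2) * Real.sqrt π)
        * (2 * (Real.sqrt π * Real.Gamma (κ+1/2) / Real.Gamma (κ+1))) := by
        rw [besselI]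
        exact mul_le_mul_of_nonneg_left hJ hC
    _ = 2 ^ (1 - κ) * x ^ κ / Real.Gamma (κ + 1) := hfin
end

section
/- For all real a ≥ 5/2 and all real x ≥ a^6/120, the upper incomplete gamma function satisfies Γ(a,x) ≤ (52/17) · x^{a-1} · e^{-x}. -/
open Real MeasureTheory

/-- The upper incomplete gamma function `Γ(a, x) = ∫_x^∞ t^(a-1) e^(-t) dt`. -/
noncomputable def gammaUpper (a x : ℝ) : ℝ :=
  ∫ t in Set.Ioi x, t ^ (a - 1) * Real.exp (-t)

/-!
For `t ≥ x`, `log (t / x) ≤ (t - x) / x` gives `(t / x) ^ (a - 3) ≤ exp ((t - x) / 10)` once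
`a - 3 ≤ x / 10`, which `x ≥ a ^ 6 / 120` guarantees. So the integrand is dominated by
`x ^ (a - 3) e^(-x/10) · t ^ 2 e^(-9t/10)`, whose integral over `(x, ∞)` is elementary, and for
`x ≥ (5/2) ^ 6 / 120` it is at most `52/17 · x ^ (a - 1) e^(-x)`.
-/

open Set Filter Topology

theorem rpow_div_le_exp_mul {x t b c : ℝ} (hx : 0 < x) (hxt : x ≤ t) (hc : 0 ≤ c)
    (hb : b ≤ c * x) : (t / x) ^ b ≤ exp (c * (t - x)) := by
  have hxt' : 1 ≤ t / x := (one_le_div hx).mpr hxt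
  rcases le_or_gt b 0 with hb0 | hb0
  · exact (rpow_le_one_of_one_le_of_nonpos hxt' hb0).trans
      (one_le_exp (mul_nonneg hc (sub_nonneg.mpr hxt)))
  rw [rpow_def_of_pos (by linarith), exp_le_exp, mul_comm]
  calc b * log (t / x) ≤ b * (t / x - 1) := by gcongr; exact log_le_sub_one_of_pos (by linarith)
    _ = b / x * (t - x) := by field_simp
    _ ≤ c * (t - x) := by
        gcongr
        exact (div_le_iff₀ hx).mpr hb

theorem rpow_mul_exp_neg_le_pow_mul_exp {a x t c : ℝ} (n : ℕ) (hx : 0 < x) (hxt : x ≤ t)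
    (hc : 0 ≤ c) (ha : a - 1 - n ≤ c * x) :
    t ^ (a - 1) * exp (-t) ≤ x ^ (a - 1 - n) * exp (-c * x) * (t ^ n * exp (-(1 - c) * t)) := by
  have ht : 0 < t := hx.trans_le hxt
  have hsplit : t ^ (a - 1) = x ^ (a - 1 - n) * (t / x) ^ (a - 1 - n) * t ^ n := by
    rw [div_rpow ht.le hx.le, rpow_sub_natCast ht.ne', mul_div_cancel₀ _ (rpow_pos_of_pos hx _).ne',
      div_mul_cancel₀ _ (pow_pos ht n).ne']
  have hexp : exp (c * (t - x)) * exp (-t) = exp (-c * x) * exp (-(1 - c) * t) := by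
    rw [← exp_add, ← exp_add]; ring_nf
  calc t ^ (a - 1) * exp (-t)
      = x ^ (a - 1 - n) * t ^ n * ((t / x) ^ (a - 1 - n) * exp (-t)) := by rw [hsplit]; ring
    _ ≤ x ^ (a - 1 - n) * t ^ n * (exp (c * (t - x)) * exp (-t)) := by
        gcongr; exact rpow_div_le_exp_mul hx hxt hc ha
    _ = _ := by rw [hexp]; ring

theorem hasDerivAt_sq_mul_exp_neg_mul_primitive {l : ℝ} (hl : l ≠ 0) (t : ℝ) :
    HasDerivAt (fun t => -(t ^ 2 / l + 2 * t / l ^ 2 + 2 / l ^ 3) * exp (-l * t))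
      (t ^ 2 * exp (-l * t)) t := by
  have hp : HasDerivAt (fun t => -(t ^ 2 / l + 2 * t / l ^ 2 + 2 / l ^ 3))
      (-(2 * t / l + 2 / l ^ 2)) t :=
    ((((hasDerivAt_pow 2 t).div_const l).add
      (((hasDerivAt_id' t).const_mul 2).div_const (l ^ 2))).add_const (2 / l ^ 3)).neg.congr_deriv
      (by ring)
  have he : HasDerivAt (fun t => exp (-l * t)) (exp (-l * t) * -l) t := by
    simpa using ((hasDerivAt_id t).const_mul (-l)).exp
  exact (hp.mul he).congr_deriv (by field_simp; ring)

theorem tendsto_sq_mul_exp_neg_mul_primitive {l : ℝ} (hl : 0 < l) :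
    Tendsto (fun t => -(t ^ 2 / l + 2 * t / l ^ 2 + 2 / l ^ 3) * exp (-l * t)) atTop (𝓝 0) := by
  have h (s : ℕ) : Tendsto (fun t : ℝ => t ^ s * exp (-l * t)) atTop (𝓝 0) := by
    simpa using tendsto_rpow_mul_exp_neg_mul_atTop_nhds_zero s l hl
  convert (((h 2).div_const l).add (((h 1).const_mul 2).div_const (l ^ 2)) |>.add
    ((h 0).const_mul (2 / l ^ 3))).neg using 1
  · ext t; ring
  · simp

theorem integrableOn_Ioi_sq_mul_exp_neg_mul {l : ℝ} (hl : 0 < l) (x : ℝ) :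
    IntegrableOn (fun t => t ^ 2 * exp (-l * t)) (Ioi x) :=
  integrableOn_Ioi_deriv_of_nonneg' (fun t _ => hasDerivAt_sq_mul_exp_neg_mul_primitive hl.ne' t)
    (fun t _ => by positivity) (tendsto_sq_mul_exp_neg_mul_primitive hl)

theorem integral_Ioi_sq_mul_exp_neg_mul {l : ℝ} (hl : 0 < l) (x : ℝ) :
    ∫ t in Ioi x, t ^ 2 * exp (-l * t) = (x ^ 2 / l + 2 * x / l ^ 2 + 2 / l ^ 3) * exp (-l * x) := by
  rw [integral_Ioi_of_hasDerivAt_of_nonneg'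
    (fun t _ => hasDerivAt_sq_mul_exp_neg_mul_primitive hl.ne' t)
    (fun t _ => by positivity) (tendsto_sq_mul_exp_neg_mul_primitive hl)]
  ring

theorem integrableOn_Ioi_rpow_mul_exp_neg {a : ℝ} (ha : 0 < a) {x : ℝ} (hx : 0 ≤ x) :
    IntegrableOn (fun t => t ^ (a - 1) * exp (-t)) (Ioi x) := by
  simpa only [mul_comm] using (GammaIntegral_convergent ha).mono_set (Ioi_subset_Ioi hx)

theorem gammaUpper_le (a x : ℝ) (ha : 5/2 ≤ a) (hx : a ^ 6 / 120 ≤ x) :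
    gammaUpper a x ≤ 52 / 17 * x ^ (a - 1) * Real.exp (-x) := by
  have ha6 : (5 / 2 : ℝ) ^ 6 ≤ a ^ 6 := pow_le_pow_left₀ (by norm_num) ha 6
  have hx_lower : 3125 / 1536 ≤ x := by linarith
  have hx0 : 0 < x := by linarith
  have hslack : a - 1 - (2 : ℕ) ≤ 1 / 10 * x := by
    nlinarith [sq_nonneg (a - 3), sq_nonneg (a ^ 2 - 9), sq_nonneg (a ^ 3 - 15),
      sq_nonneg (a ^ 2 - 5 * a)]
  have hquad : x ^ 2 / (1 - 1 / 10) + 2 * x / (1 - 1 / 10) ^ 2 + 2 / (1 - 1 / 10) ^ 3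
      ≤ 52 / 17 * x ^ 2 := by
    norm_num
    nlinarith [mul_nonneg (sub_nonneg.mpr hx_lower) hx0.le]
  have hexp : exp (-x) = exp (-(1 / 10) * x) * exp (-(1 - 1 / 10) * x) := by
    rw [← exp_add]; ring_nf
  calc gammaUpper a x
      ≤ ∫ t in Ioi x, x ^ (a - 1 - (2 : ℕ)) * exp (-(1 / 10) * x) *
          (t ^ 2 * exp (-(1 - 1 / 10) * t)) :=
        setIntegral_mono_on (integrableOn_Ioi_rpow_mul_exp_neg (by linarith) hx0.le)
          ((integrableOn_Ioi_sq_mul_exp_neg_mul (by norm_num) x).const_mul _) measurableSet_Ioi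
          fun t ht => rpow_mul_exp_neg_le_pow_mul_exp 2 hx0 ht.out.le (by norm_num) hslack
    _ = x ^ (a - 1 - (2 : ℕ)) * exp (-x) *
          (x ^ 2 / (1 - 1 / 10) + 2 * x / (1 - 1 / 10) ^ 2 + 2 / (1 - 1 / 10) ^ 3) := by
        rw [integral_const_mul, integral_Ioi_sq_mul_exp_neg_mul (by norm_num), hexp]
        ring
    _ ≤ x ^ (a - 1 - (2 : ℕ)) * exp (-x) * (52 / 17 * x ^ 2) := by gcongr
    _ = 52 / 17 * x ^ (a - 1) * exp (-x) := by
        rw [rpow_sub_natCast hx0.ne']; field_simp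
end

section
/- For all real a ≥ 5/2, one has Γ(a+1)^{1/(a-1)} < 9a/10. -/
open Real

/-- convex combination of strict inequalities -/
lemma combo_lt {t A B C D : ℝ} (ht0 : 0 ≤ t) (ht1 : t ≤ 1) (h1 : A < C) (h2 : B < D) :
    (1 - t) * A + t * B < (1 - t) * C + t * D := by
  rcases eq_or_lt_of_le ht0 with rfl | ht0'
  · simpa using h1
  · have h3 : (1 - t) * A ≤ (1 - t) * C :=
      mul_le_mul_of_nonneg_left h1.le (by linarith)
    have h4 : t * B < t * D := (mul_lt_mul_iff_right₀ ht0').2 h2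
    linarith

/-- log-convexity of Gamma, interpolation form, allowing endpoints -/
lemma interp_Gamma {x y : ℝ} (hx : 0 < x) (hy : 0 < y) {t : ℝ} (ht0 : 0 ≤ t) (ht1 : t ≤ 1) :
    Real.Gamma ((1 - t) * x + t * y) ≤ Real.Gamma x ^ (1 - t) * Real.Gamma y ^ t := by
  rcases eq_or_lt_of_le ht0 with rfl | ht0'
  · simp
  rcases eq_or_lt_of_le ht1 with rfl | ht1'
  · simp
  exact Real.Gamma_mul_add_mul_le_rpow_Gamma_mul_rpow_Gamma hx hy (by linarith) ht0'
    (by ring)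

/-- factorial bound: n! < (9n/10)^(n-1) for n ≥ 3 -/
lemma fact_bound : ∀ n : ℕ, 3 ≤ n → (n.factorial : ℝ) < (9 * n / 10) ^ (n - 1) := by
  intro n hn
  induction n, hn using Nat.le_induction with
  | base => norm_num [Nat.factorial]
  | succ n hn ih =>
    have hN : (3 : ℝ) ≤ (n : ℝ) := by exact_mod_cast hn
    have hNpos : (0 : ℝ) < n := by linarith
    have hbase : (0 : ℝ) < 9 * n / 10 := by linarith
    have hcast : ((n - 1 : ℕ) : ℝ) = (n : ℝ) - 1 := by
      have : 1 ≤ n := by omega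
      push_cast [this]; ring
    -- Bernoulli: (1 + 1/n)^(n-1) ≥ 1 + (n-1)/n
    have hbern : 1 + ((n : ℝ) - 1) * (1 / n) ≤ (1 + 1 / (n : ℝ)) ^ (n - 1) := by
      have h0 : (0:ℝ) ≤ 1 / (n:ℝ) := by positivity
      have := one_add_mul_le_pow (a := 1 / (n : ℝ)) (by linarith : (-2:ℝ) ≤ 1 / (n:ℝ)) (n - 1)
      calc 1 + ((n : ℝ) - 1) * (1 / n) = 1 + ((n - 1 : ℕ) : ℝ) * (1 / n) := by rw [hcast]
        _ ≤ _ := this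
    have key : ((n : ℝ) + 1) * (9 * n / 10) ^ (n - 1) ≤ (9 * (n + 1) / 10) ^ n := by
      have hsplit : (9 * ((n : ℝ) + 1) / 10) = (9 * n / 10) * (1 + 1 / n) := by
        field_simp
      have hn1 : (9 * ((n:ℝ) + 1) / 10) ^ n = (9 * ((n:ℝ) + 1) / 10) ^ (n - 1) * (9 * ((n:ℝ) + 1) / 10) := by
        rw [← pow_succ, Nat.sub_add_cancel (by omega)]
      rw [hn1, hsplit, mul_pow]
      have h1 : (9 * (n : ℝ) / 10) ^ (n - 1) * ((1 + 1 / (n : ℝ)) ^ (n - 1)) ≥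
          (9 * (n : ℝ) / 10) ^ (n - 1) * (1 + ((n : ℝ) - 1) * (1 / n)) :=
        mul_le_mul_of_nonneg_left hbern (by positivity)
      have h2 : ((n : ℝ) + 1) ≤ (1 + ((n : ℝ) - 1) * (1 / n)) * (9 * n / 10 * (1 + 1 / n)) := by
        rw [← sub_nonneg]
        have hexp : (1 + ((n : ℝ) - 1) * (1 / n)) * (9 * n / 10 * (1 + 1 / n)) - ((n:ℝ) + 1) =
            ((n:ℝ) + 1) * (8 * n - 9) / (10 * n) := by field_simp; ring
        rw [hexp]
        exact div_nonneg (by nlinarith) (by positivity)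

      calc ((n : ℝ) + 1) * (9 * n / 10) ^ (n - 1)
          ≤ ((1 + ((n : ℝ) - 1) * (1 / n)) * (9 * n / 10 * (1 + 1 / n))) * (9 * n / 10) ^ (n - 1) := by
            apply mul_le_mul_of_nonneg_right h2 (by positivity)
        _ = (9 * n / 10) ^ (n - 1) * (1 + ((n : ℝ) - 1) * (1 / n)) * (9 * n / 10 * (1 + 1 / n)) := by
            ring
        _ ≤ (9 * n / 10) ^ (n - 1) * ((1 + 1 / (n : ℝ)) ^ (n - 1)) * (9 * n / 10 * (1 + 1 / n)) := by
            apply mul_le_mul_of_nonneg_right h1 (by positivity)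
    have hfac : ((n + 1).factorial : ℝ) = ((n : ℝ) + 1) * (n.factorial : ℝ) := by
      rw [Nat.factorial_succ]; push_cast; ring
    have : ((n + 1).factorial : ℝ) < ((n : ℝ) + 1) * (9 * n / 10) ^ (n - 1) := by
      rw [hfac]
      exact mul_lt_mul_of_pos_left ih (by linarith)
    calc ((n + 1).factorial : ℝ) < ((n : ℝ) + 1) * (9 * n / 10) ^ (n - 1) := this
      _ ≤ (9 * ((n : ℝ) + 1) / 10) ^ n := key
      _ = (9 * (↑(n + 1) : ℝ) / 10) ^ ((n + 1) - 1) := by push_cast; norm_num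


lemma main_case (n : ℕ) (hn : 3 ≤ n) (a : ℝ) (h1 : (n : ℝ) ≤ a) (h2 : a ≤ (n : ℝ) + 1) :
    Real.Gamma (a + 1) < (9 * a / 10) ^ (a - 1) := by
  have hN : (3 : ℝ) ≤ (n : ℝ) := by exact_mod_cast hn
  set N : ℝ := (n : ℝ) with hNdef
  set t : ℝ := a - N with htdef
  have ht0 : 0 ≤ t := by linarith
  have ht1 : t ≤ 1 := by linarith
  have hapos : (0 : ℝ) < a := by linarith
  have hbase : (0 : ℝ) < 9 * a / 10 := by linarith
  have hbaseN : (0 : ℝ) < 9 * N / 10 := by linarith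
  have hF : (0 : ℝ) < (n.factorial : ℝ) := by
    exact_mod_cast Nat.factorial_pos n
  set F : ℝ := (n.factorial : ℝ) with hFdef
  set P : ℝ := (9 * N / 10) ^ (n - 1) with hPdef
  have hP : 0 < P := pow_pos hbaseN _
  set b : ℝ := 10 * (N + 1) / (9 * N) with hbdef
  have hb1 : (1 : ℝ) ≤ b := by
    rw [hbdef, le_div_iff₀ (by linarith)]; linarith
  -- Step A : interpolation
  have hA : Real.Gamma (a + 1) ≤ F * (N + 1) ^ t := by
    have hxy : a + 1 = (1 - t) * (N + 1) + t * (N + 2) := by rw [htdef]; ring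
    have hint := interp_Gamma (x := N + 1) (y := N + 2) (by linarith) (by linarith) ht0 ht1
    rw [← hxy] at hint
    have g1 : Real.Gamma (N + 1) = F := Real.Gamma_nat_eq_factorial n
    have g2 : Real.Gamma (N + 2) = F * (N + 1) := by
      have h := Real.Gamma_nat_eq_factorial (n + 1)
      rw [Nat.factorial_succ] at h
      push_cast at h
      rw [show N + 2 = (N + 1) + 1 by ring, hNdef]
      rw [h]; ring
    rw [g1, g2] at hint
    refine hint.trans_eq ?_
    calc F ^ (1 - t) * (F * (N + 1)) ^ t
        = F ^ (1 - t) * (F ^ t * (N + 1) ^ t) := by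
          rw [Real.mul_rpow hF.le (by linarith)]
      _ = (F ^ (1 - t) * F ^ t) * (N + 1) ^ t := by ring
      _ = F ^ ((1 - t) + t) * (N + 1) ^ t := by rw [Real.rpow_add hF]
      _ = F * (N + 1) ^ t := by norm_num
  -- Step B pieces
  have key1 : (N + 1) ^ t ≤ (9 * a / 10) ^ t * b ^ t := by
    rw [← Real.mul_rpow hbase.le (by linarith : (0:ℝ) ≤ b)]
    apply Real.rpow_le_rpow (by linarith) ?_ ht0
    have he : 9 * a / 10 * b = (N + 1) * (a / N) := by
      rw [hbdef]; field_simp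
    rw [he]
    have : (1 : ℝ) ≤ a / N := by rw [le_div_iff₀ (by linarith)]; linarith
    nlinarith
  have key2 : b ^ t ≤ 1 + (b - 1) * t := by
    have h := rpow_one_add_le_one_add_mul_self (s := b - 1) (by linarith) ht0 ht1
    rw [show 1 + (b - 1) = b by ring] at h
    linarith
  have key3 : P * (1 + (N - 1) * t / N) ≤ (9 * a / 10) ^ (N - 1) := by
    have hsplit : 9 * a / 10 = (9 * N / 10) * (1 + t / N) := by
      rw [htdef]; field_simp; ring
    rw [hsplit, Real.mul_rpow hbaseN.le (by positivity)]
    have hc : ((n - 1 : ℕ) : ℝ) = N - 1 := by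
      rw [hNdef]; push_cast [show 1 ≤ n by omega]; ring
    have hPn : (9 * N / 10) ^ (N - 1) = P := by
      rw [hPdef, ← hc, Real.rpow_natCast]
    rw [hPn]
    apply mul_le_mul_of_nonneg_left ?_ hP.le
    have h0 : (0:ℝ) ≤ t / N := div_nonneg ht0 (by linarith)
    have h := one_add_mul_self_le_rpow_one_add (s := t / N) (by linarith) (p := N - 1)
      (by linarith)
    calc 1 + (N - 1) * t / N = 1 + (N - 1) * (t / N) := by ring
      _ ≤ (1 + t / N) ^ (N - 1) := h
  have key4 : F * (1 + (b - 1) * t) < P * (1 + (N - 1) * t / N) := by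
    have E0 : F < P := fact_bound n hn
    have E1 : F * b < P * ((2 * N - 1) / N) := by
      have hb2 : b ≤ (2 * N - 1) / N := by
        rw [hbdef, div_le_div_iff₀ (by linarith) (by linarith)]
        nlinarith
      calc F * b < P * b := by
            apply mul_lt_mul_of_pos_right E0 (by linarith)
        _ ≤ P * ((2 * N - 1) / N) := mul_le_mul_of_nonneg_left hb2 hP.le
    have hcomb := combo_lt ht0 ht1 E0 E1
    have e1 : F * (1 + (b - 1) * t) = (1 - t) * F + t * (F * b) := by ring
    have e2 : P * (1 + (N - 1) * t / N) = (1 - t) * P + t * (P * ((2 * N - 1) / N)) := by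
      field_simp; ring
    rw [e1, e2]; exact hcomb
  -- chain
  calc Real.Gamma (a + 1) ≤ F * (N + 1) ^ t := hA
    _ ≤ F * ((9 * a / 10) ^ t * b ^ t) := mul_le_mul_of_nonneg_left key1 hF.le
    _ = (9 * a / 10) ^ t * (F * b ^ t) := by ring
    _ ≤ (9 * a / 10) ^ t * (F * (1 + (b - 1) * t)) := by
        apply mul_le_mul_of_nonneg_left (mul_le_mul_of_nonneg_left key2 hF.le)
          (Real.rpow_nonneg hbase.le t)
    _ < (9 * a / 10) ^ t * (P * (1 + (N - 1) * t / N)) := by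
        exact (mul_lt_mul_iff_right₀ (Real.rpow_pos_of_pos hbase t)).2 key4
    _ ≤ (9 * a / 10) ^ t * (9 * a / 10) ^ (N - 1) := by
        apply mul_le_mul_of_nonneg_left key3 (Real.rpow_nonneg hbase.le t)
    _ = (9 * a / 10) ^ (a - 1) := by
        rw [← Real.rpow_add hbase]
        congr 1
        rw [htdef]; ring

lemma low_case (a : ℝ) (h1 : 5/2 ≤ a) (h2 : a ≤ 3) :
    Real.Gamma (a + 1) < (9 * a / 10) ^ (a - 1) := by
  have hpi : Real.sqrt Real.pi < 9/5 := by
    rw [Real.sqrt_lt' (by norm_num)]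
    nlinarith [Real.pi_lt_d2]
  have hpi0 : 0 < Real.sqrt Real.pi := Real.sqrt_pos.2 Real.pi_pos
  set G : ℝ := Real.Gamma (7/2) with hGdef
  have hGval : G = 15 * Real.sqrt Real.pi / 8 := by
    rw [hGdef, show (7 : ℝ)/2 = 5/2 + 1 by norm_num, Real.Gamma_add_one (by norm_num),
        show (5 : ℝ)/2 = 3/2 + 1 by norm_num, Real.Gamma_add_one (by norm_num),
        show (3 : ℝ)/2 = 1/2 + 1 by norm_num, Real.Gamma_add_one (by norm_num),
        Real.Gamma_one_half_eq]
    ring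
  have hG0 : 0 < G := by rw [hGval]; positivity
  have hG4 : G ≤ 4 := by rw [hGval]; nlinarith
  have hG278 : G < 27/8 := by rw [hGval]; nlinarith
  set s : ℝ := 2 * a - 5 with hsdef
  have hs0 : 0 ≤ s := by rw [hsdef]; linarith
  have hs1 : s ≤ 1 := by rw [hsdef]; linarith
  have hbase : (0 : ℝ) < 9 * a / 10 := by linarith
  -- Step A
  have hA : Real.Gamma (a + 1) ≤ G * (6/G) ^ s := by
    have hxy : a + 1 = (1 - s) * (7/2) + s * 4 := by rw [hsdef]; ring
    have h4 : Real.Gamma (4 : ℝ) = 6 := by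
      rw [show (4 : ℝ) = ((3 : ℕ) : ℝ) + 1 by norm_num, Real.Gamma_nat_eq_factorial]
      norm_num [Nat.factorial]
    have hint := interp_Gamma (x := 7/2) (y := 4) (by norm_num) (by norm_num) hs0 hs1
    rw [← hxy, h4, ← hGdef] at hint
    refine hint.trans_eq ?_
    calc G ^ (1 - s) * 6 ^ s = (G ^ (1 : ℝ) / G ^ s) * 6 ^ s := by
          rw [Real.rpow_sub hG0]
      _ = G * (6 ^ s / G ^ s) := by rw [Real.rpow_one]; ring
      _ = G * (6/G) ^ s := by rw [Real.div_rpow (by norm_num) hG0.le]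
  have hsplit6 : (6/G : ℝ) = (3/2) * (4/G) := by
    field_simp; ring
  have key2 : (4/G) ^ s ≤ 1 + (4/G - 1) * s := by
    have hc1 : (1 : ℝ) ≤ 4/G := by
      rw [le_div_iff₀ hG0]; linarith
    have h := rpow_one_add_le_one_add_mul_self (s := 4/G - 1) (by linarith) hs0 hs1
    rw [show 1 + (4/G - 1) = 4/G by ring] at h
    linarith
  have key1 : ((3 : ℝ)/2) ^ s ≤ ((9 * a / 10) ^ ((1 : ℝ)/2)) ^ s := by
    apply Real.rpow_le_rpow (by norm_num) ?_ hs0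
    have h94 : ((9 : ℝ)/4) ^ ((1 : ℝ)/2) = 3/2 := by
      rw [show (9 : ℝ)/4 = (3/2) ^ (2 : ℕ) by norm_num, ← Real.rpow_natCast ((3:ℝ)/2) 2,
          ← Real.rpow_mul (by norm_num)]
      norm_num
    rw [← h94]
    exact Real.rpow_le_rpow (by norm_num) (by linarith) (by norm_num)
  have key3 : (27/8 : ℝ) * (1 + (3/10) * s) ≤ (9 * a / 10) ^ ((3 : ℝ)/2) := by
    have hsplit : 9 * a / 10 = (9/4) * (1 + s/5) := by rw [hsdef]; ring
    rw [hsplit, Real.mul_rpow (by norm_num) (by linarith : (0:ℝ) ≤ 1 + s/5)]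
    have h98 : ((9 : ℝ)/4) ^ ((3 : ℝ)/2) = 27/8 := by
      rw [show (9 : ℝ)/4 = (3/2) ^ (2 : ℕ) by norm_num, ← Real.rpow_natCast ((3:ℝ)/2) 2,
          ← Real.rpow_mul (by norm_num),
          show ((2 : ℕ) : ℝ) * (3/2) = ((3 : ℕ) : ℝ) by push_cast; ring,
          Real.rpow_natCast]
      norm_num
    rw [h98]
    apply mul_le_mul_of_nonneg_left ?_ (by norm_num)
    have h := one_add_mul_self_le_rpow_one_add (s := s/5) (by linarith) (p := (3 : ℝ)/2)
      (by norm_num)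
    linarith
  have key4 : G * (1 + (4/G - 1) * s) < (27/8 : ℝ) * (1 + (3/10) * s) := by
    have hcomb := combo_lt hs0 hs1 hG278 (show (4 : ℝ) < 351/80 by norm_num)
    have e1 : G * (1 + (4/G - 1) * s) = (1 - s) * G + s * 4 := by
      field_simp; ring
    have e2 : (27/8 : ℝ) * (1 + (3/10) * s) = (1 - s) * (27/8) + s * (351/80) := by ring
    rw [e1, e2]; exact hcomb
  have hq : (0 : ℝ) ≤ 27/8 * (1 + (3/10) * s) := by nlinarith
  calc Real.Gamma (a + 1) ≤ G * (6/G) ^ s := hA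
    _ = G * ((3/2) ^ s * (4/G) ^ s) := by
        rw [hsplit6, Real.mul_rpow (by norm_num) (by positivity)]
    _ = (3/2) ^ s * (G * (4/G) ^ s) := by ring
    _ ≤ (3/2) ^ s * (G * (1 + (4/G - 1) * s)) := by
        apply mul_le_mul_of_nonneg_left (mul_le_mul_of_nonneg_left key2 hG0.le)
          (Real.rpow_nonneg (by norm_num) s)
    _ < (3/2) ^ s * ((27/8) * (1 + (3/10) * s)) := by
        exact (mul_lt_mul_iff_right₀ (Real.rpow_pos_of_pos (by norm_num) s)).2 key4
    _ ≤ ((9 * a / 10) ^ ((1 : ℝ)/2)) ^ s * ((27/8) * (1 + (3/10) * s)) := by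
        exact mul_le_mul_of_nonneg_right key1 hq
    _ ≤ ((9 * a / 10) ^ ((1 : ℝ)/2)) ^ s * (9 * a / 10) ^ ((3 : ℝ)/2) := by
        apply mul_le_mul_of_nonneg_left key3 (Real.rpow_nonneg (Real.rpow_nonneg hbase.le _) s)
    _ = (9 * a / 10) ^ (a - 1) := by
        rw [← Real.rpow_mul hbase.le, ← Real.rpow_add hbase]
        congr 1
        rw [hsdef]; ring

theorem gamma_root_lt (a : ℝ) (ha : 5/2 ≤ a) :
    Real.Gamma (a + 1) ^ (1 / (a - 1)) < 9 * a / 10 := by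
  have ha1 : (0 : ℝ) < a - 1 := by linarith
  have hbase : (0 : ℝ) < 9 * a / 10 := by linarith
  have key : Real.Gamma (a + 1) < (9 * a / 10) ^ (a - 1) := by
    rcases le_or_gt a 3 with h | h
    · exact low_case a ha h
    · have h3 : 3 ≤ ⌊a⌋₊ := Nat.le_floor (by push_cast; linarith)
      exact main_case ⌊a⌋₊ h3 a (Nat.floor_le (by linarith)) (Nat.lt_floor_add_one a).le
  have hG : 0 < Real.Gamma (a + 1) := Real.Gamma_pos_of_pos (by linarith)
  have hlt := Real.rpow_lt_rpow hG.le key (by positivity : (0:ℝ) < 1/(a-1))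
  rwa [← Real.rpow_mul hbase.le, mul_one_div_cancel (ne_of_gt ha1), Real.rpow_one] at hlt
end

section
/- For all real a ≥ 5/2, one has (1 + 108/a^5)^{a-1} < 52/17. -/
open Real Set

theorem one_add_pow_lt (a : ℝ) (ha : 5/2 ≤ a) :
    (1 + 108 / a ^ 5) ^ (a - 1) < 52 / 17 := by
  have ha0 : (0:ℝ) < a := by linarith
  set g : ℝ → ℝ := fun x => (x - 1) * Real.log (1 + 108 / x ^ 5) with hg
  have hcont : ContinuousOn g (Ici (5/2 : ℝ)) := by
    apply ContinuousOn.mul (by fun_prop)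
    apply ContinuousOn.log
    · apply ContinuousOn.add continuousOn_const
      apply ContinuousOn.div continuousOn_const (by fun_prop)
      intro x hx
      have hx0 : (0:ℝ) < x := lt_of_lt_of_le (by norm_num) hx
      positivity
    · intro x hx
      have hx0 : (0:ℝ) < x := lt_of_lt_of_le (by norm_num) hx
      positivity
  have hderiv : ∀ x ∈ interior (Ici (5/2 : ℝ)), deriv g x < 0 := by
    intro x hx
    rw [interior_Ici] at hx
    have hx52 : (5:ℝ)/2 < x := hx
    have hx0 : (0:ℝ) < x := by linarith
    have hx5 : (x:ℝ)^5 ≠ 0 := by positivity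
    have hb : (0:ℝ) < 1 + 108 / x ^ 5 := by positivity
    have h1 : HasDerivAt (fun y : ℝ => 108 / y ^ 5)
        ((0 * x ^ 5 - 108 * (↑5 * x ^ (5 - 1))) / (x ^ 5) ^ 2) x :=
      (hasDerivAt_const x (108:ℝ)).div (hasDerivAt_pow 5 x) hx5
    have h2 : HasDerivAt (fun y : ℝ => 1 + 108 / y ^ 5)
        ((0 * x ^ 5 - 108 * (↑5 * x ^ (5 - 1))) / (x ^ 5) ^ 2) x := h1.const_add 1
    have h3 := h2.log (ne_of_gt hb)
    have h4 : HasDerivAt g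
        (1 * Real.log (1 + 108 / x ^ 5) +
          (x - 1) * ((0 * x ^ 5 - 108 * (↑5 * x ^ (5 - 1))) / (x ^ 5) ^ 2 / (1 + 108 / x ^ 5))) x :=
      ((hasDerivAt_id x).sub_const 1).mul h3
    rw [h4.deriv]
    have hlog : Real.log (1 + 108 / x ^ 5) ≤ 108 / x ^ 5 := by
      have := Real.log_le_sub_one_of_pos hb
      linarith
    have hfrac : (x - 1) * ((0 * x ^ 5 - 108 * (↑5 * x ^ (5 - 1))) / (x ^ 5) ^ 2 / (1 + 108 / x ^ 5))
        = -(540 * (x - 1) / (x ^ 6 + 108 * x)) := by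
      have hx6 : (0:ℝ) < x ^ 6 + 108 * x := by positivity
      field_simp
      ring
    have hkey : 108 / x ^ 5 < 540 * (x - 1) / (x ^ 6 + 108 * x) := by
      rw [div_lt_div_iff₀ (by positivity) (by positivity)]
      have h5 : (5/2:ℝ)^5 ≤ x^5 := pow_le_pow_left₀ (by norm_num) hx52.le 5
      have h4' : (5/2:ℝ)^4 ≤ x^4 := pow_le_pow_left₀ (by norm_num) hx52.le 4
      nlinarith [mul_le_mul_of_nonneg_right h5 hx0.le, mul_le_mul_of_nonneg_right h4' hx0.le,
        pow_pos hx0 5, mul_pos (pow_pos hx0 4) hx0, mul_le_mul_of_nonneg_left h4' hx0.le]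
    rw [hfrac]
    linarith
  have hanti : StrictAntiOn g (Ici (5/2 : ℝ)) :=
    strictAntiOn_of_deriv_neg (convex_Ici _) hcont hderiv
  have hle : g a ≤ g (5/2) := by
    rcases eq_or_lt_of_le ha with h | h
    · rw [← h]
    · exact (hanti self_mem_Ici (le_of_lt h) h).le
  have hbpos : (0:ℝ) < 1 + 108 / a ^ 5 := by positivity
  have hrw : (1 + 108 / a ^ 5) ^ (a - 1) = Real.exp (g a) := by
    rw [Real.rpow_def_of_pos hbpos, hg]
    ring_nf
  have hend : Real.exp (g (5/2)) < 52 / 17 := by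
    have h25 : ((5:ℝ)/2) ^ 5 = 3125 / 32 := by norm_num
    have : g (5/2) = (3/2) * Real.log (6581/3125) := by
      rw [hg]
      norm_num
    rw [this]
    have hb6 : (0:ℝ) < 6581/3125 := by norm_num
    have hrpow : Real.exp ((3/2) * Real.log (6581/3125)) = (6581/3125 : ℝ) ^ ((3:ℝ)/2) := by
      rw [Real.rpow_def_of_pos hb6]
      ring_nf
    rw [hrpow]
    have hsq : ((6581/3125 : ℝ) ^ ((3:ℝ)/2)) ^ (2:ℕ) = (6581/3125 : ℝ) ^ (3:ℕ) := by
      rw [← Real.rpow_natCast ((6581/3125 : ℝ) ^ ((3:ℝ)/2)) 2, ← Real.rpow_mul hb6.le]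
      norm_num
    have h2 : ((6581/3125 : ℝ) ^ ((3:ℝ)/2)) ^ (2:ℕ) < (52/17 : ℝ) ^ (2:ℕ) := by
      rw [hsq]; norm_num
    exact lt_of_pow_lt_pow_left₀ 2 (by norm_num) h2
  calc (1 + 108 / a ^ 5) ^ (a - 1) = Real.exp (g a) := hrw
    _ ≤ Real.exp (g (5/2)) := Real.exp_le_exp.mpr hle
    _ < 52 / 17 := hend
end

section
/- Let k be a positive integer and (d_j)_{j≥1} a sequence of positive integers with d_j ≤ j. Define p⁻(0) = 1, p⁻(n) = 0 for n < 0, and p⁻(n) = (k/n)·∑_{ℓ=1}^{d_n} σ(ℓ)·p⁻(n-ℓ) for n ≥ 1. Then p⁻(n) ≤ p_k(n) for all n ≥ 0. -/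
/-!
The colored partition numbers satisfy the recurrence defining `p⁻` with the full range
`1 ≤ ℓ ≤ n` in place of `1 ≤ ℓ ≤ d_n`. Indeed, `n · p_k(n)` is the total size of the parts of all
`k`-colored partitions of `n`; a part `m` of color `c` occurring at least `j` times corresponds,
after removing `j` copies, to a partition of `n - jm`, and grouping the pairs `(m, j)` by
`ℓ = mj` produces the weight `∑_{m ∣ ℓ} m = σ(ℓ)`. Truncating the sum to `ℓ ≤ d_n ≤ n` drops
only nonnegative terms, so `p⁻ ≤ p_k` follows by strong induction.
-/

/-- The number of `k`-colored partitions of `n`. -/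
noncomputable def coloredPartition (k n : ℕ) : ℕ :=
  Nat.card {s : Multiset (ℕ × Fin k) //
    (∀ x ∈ s, 0 < x.1) ∧ (s.map Prod.fst).sum = n}

/-- The lower approximating sequence `p⁻_{k,d}`. -/
noncomputable def pLower (k : ℕ) (d : ℕ → ℕ) : ℕ → ℝ
  | 0 => 1
  | n + 1 =>
    (k : ℝ) / (n + 1) * ∑ ℓ ∈ (Finset.Icc 1 (d (n + 1))).attach,
      (∑ i ∈ Nat.divisors ℓ.1, (i : ℝ)) * pLower k d (n + 1 - ℓ.1)
  decreasing_by
    have := (Finset.mem_Icc.mp ℓ.2).1; omega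

open Finset

theorem Finset.sum_eq_sum_Icc_card_filter_le {β : Type*} (S : Finset β) (f : β → ℕ) (N : ℕ)
    (hf : ∀ s ∈ S, f s ≤ N) : ∑ s ∈ S, f s = ∑ j ∈ Icc 1 N, #{s ∈ S | j ≤ f s} := by
  simp only [card_eq_sum_ones, sum_filter]
  rw [sum_comm]
  refine sum_congr rfl fun s hs => ?_
  have hfilter : {j ∈ Icc 1 N | j ≤ f s} = Icc 1 (f s) := by
    ext j
    simp only [mem_filter, mem_Icc]
    have := hf s hs
    omega
  rw [sum_boole, Nat.cast_id, hfilter, Nat.card_Icc, Nat.add_sub_cancel]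

theorem Nat.sum_Icc_sum_Icc_div_eq_sum_Icc_sum_divisors {M : Type*} [AddCommMonoid M]
    (f : ℕ → ℕ → M) (n : ℕ) :
    ∑ m ∈ Icc 1 n, ∑ j ∈ Icc 1 (n / m), f m (m * j) = ∑ ℓ ∈ Icc 1 n, ∑ d ∈ ℓ.divisors, f d ℓ := by
  rw [sum_sigma', sum_sigma']
  refine sum_nbij' (fun p => ⟨p.1 * p.2, p.1⟩) (fun q => ⟨q.2, q.1 / q.2⟩) ?_ ?_ ?_ ?_ ?_
  · rintro ⟨m, j⟩ h
    simp only [mem_sigma, mem_Icc, Nat.mem_divisors] at h ⊢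
    obtain ⟨⟨hm, -⟩, hj, hjn⟩ := h
    have hmj : j * m ≤ n := (Nat.le_div_iff_mul_le hm).mp hjn
    exact ⟨⟨Nat.mul_pos hm hj, by rwa [mul_comm]⟩, dvd_mul_right m j, (Nat.mul_pos hm hj).ne'⟩
  · rintro ⟨ℓ, d⟩ h
    simp only [mem_sigma, mem_Icc, Nat.mem_divisors] at h ⊢
    obtain ⟨⟨-, hℓn⟩, hdℓ, hℓ⟩ := h
    have hdℓ' : d ≤ ℓ := Nat.le_of_dvd (Nat.pos_of_ne_zero hℓ) hdℓ
    have hd : 0 < d := Nat.pos_of_dvd_of_pos hdℓ (Nat.pos_of_ne_zero hℓ)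
    exact ⟨⟨hd, hdℓ'.trans hℓn⟩, Nat.div_pos hdℓ' hd, Nat.div_le_div_right hℓn⟩
  · rintro ⟨m, j⟩ h
    simp only [mem_sigma, mem_Icc] at h
    simp [Nat.mul_div_cancel_left j h.1.1]
  · rintro ⟨ℓ, d⟩ h
    simp only [mem_sigma, Nat.mem_divisors] at h
    simp [Nat.mul_div_cancel' h.2.1]
  · rintro ⟨m, j⟩ _
    rfl

section ColoredPartitions

variable {k n : ℕ} {s : Multiset (ℕ × Fin k)}

def IsColoredPartition (n : ℕ) (s : Multiset (ℕ × Fin k)) : Prop :=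
  (∀ x ∈ s, 0 < x.1) ∧ (s.map Prod.fst).sum = n

theorem IsColoredPartition.fst_le (hs : IsColoredPartition n s) {x : ℕ × Fin k} (hx : x ∈ s) :
    x.1 ≤ n :=
  hs.2 ▸ Multiset.le_sum_of_mem (Multiset.mem_map_of_mem _ hx)

theorem IsColoredPartition.card_le (hs : IsColoredPartition n s) : Multiset.card s ≤ n := by
  calc Multiset.card s = Multiset.card (s.map Prod.fst) • 1 := by simp
    _ ≤ n := hs.2 ▸ Multiset.card_nsmul_le_sum fun m hm => by
      obtain ⟨x, hx, rfl⟩ := Multiset.mem_map.mp hm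
      exact hs.1 x hx

theorem IsColoredPartition.le_nsmul (hs : IsColoredPartition n s) :
    s ≤ n • (Icc 1 n ×ˢ (univ : Finset (Fin k))).val := by
  refine Multiset.le_iff_count.mpr fun x => ?_
  by_cases hx : x ∈ s
  · rw [Multiset.count_nsmul, Multiset.count_eq_one_of_mem (Finset.nodup _)
      (mem_product.mpr ⟨mem_Icc.mpr ⟨hs.1 x hx, hs.fst_le hx⟩, mem_univ _⟩), mul_one]
    exact (Multiset.count_le_card x s).trans hs.card_le
  · rw [Multiset.count_eq_zero_of_notMem hx]
    exact Nat.zero_le _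

theorem isColoredPartition_add_replicate {m j : ℕ} (hm : 0 < m) (c : Fin k) :
    IsColoredPartition (n + j * m) (s + Multiset.replicate j (m, c)) ↔
      IsColoredPartition n s := by
  simp only [IsColoredPartition, Multiset.mem_add, or_imp, forall_and, Multiset.map_add,
    Multiset.sum_add, Multiset.map_replicate, Multiset.sum_replicate, smul_eq_mul]
  have hrep : ∀ x ∈ Multiset.replicate j (m, c), 0 < x.1 := fun x hx => by
    rw [Multiset.eq_of_mem_replicate hx]
    exact hm
  simp only [and_iff_left hrep, Nat.add_right_cancel_iff]

theorem IsColoredPartition.count_mul_le (hs : IsColoredPartition n s) (m : ℕ) (c : Fin k) :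
    s.count (m, c) * m ≤ n := by
  obtain ⟨t, ht⟩ := Multiset.le_iff_exists_add.mp
    (Multiset.le_count_iff_replicate_le.mp (le_refl (s.count (m, c))))
  have hsum := hs.2
  rw [ht] at hsum
  simp only [Multiset.map_add, Multiset.map_replicate, Multiset.sum_add, Multiset.sum_replicate,
    smul_eq_mul] at hsum
  omega

-- The powerset only makes the set visibly finite: it contains every colored partition of `n`
-- by `IsColoredPartition.le_nsmul`.
open Classical in
noncomputable def coloredPartitions (k n : ℕ) : Finset (Multiset (ℕ × Fin k)) :=
  {s ∈ (n • (Icc 1 n ×ˢ (univ : Finset (Fin k))).val).powerset.toFinset | IsColoredPartition n s}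

theorem mem_coloredPartitions : s ∈ coloredPartitions k n ↔ IsColoredPartition n s := by
  simp only [coloredPartitions, mem_filter, Multiset.mem_toFinset, Multiset.mem_powerset,
    and_iff_right_iff_imp]
  exact IsColoredPartition.le_nsmul

theorem coloredPartition_eq_card : coloredPartition k n = #(coloredPartitions k n) := by
  rw [← Nat.card_eq_finsetCard]
  exact Nat.card_congr (Equiv.subtypeEquivRight fun _ => mem_coloredPartitions.symm)

theorem coloredPartitions_zero : coloredPartitions k 0 = {0} := by
  ext s
  rw [mem_coloredPartitions, mem_singleton]
  refine ⟨fun hs => Multiset.card_eq_zero.mp (Nat.le_zero.mp hs.card_le), ?_⟩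
  rintro rfl
  simp [IsColoredPartition]

theorem card_filter_le_count_coloredPartitions {m j : ℕ} (hm : 0 < m) (hjm : j * m ≤ n)
    (c : Fin k) :
    #{s ∈ coloredPartitions k n | j ≤ s.count (m, c)} = #(coloredPartitions k (n - j * m)) := by
  have hn : n - j * m + j * m = n := Nat.sub_add_cancel hjm
  refine card_nbij' (· - Multiset.replicate j (m, c)) (· + Multiset.replicate j (m, c))
    ?_ ?_ ?_ ?_
  · intro s hs
    simp only [coe_filter, Set.mem_ofPred_eq, mem_coloredPartitions,
      Multiset.le_count_iff_replicate_le] at hs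
    simp only [mem_coe, mem_coloredPartitions]
    rw [← isColoredPartition_add_replicate hm c, hn, tsub_add_cancel_of_le hs.2]
    exact hs.1
  · intro t ht
    simp only [mem_coe, mem_coloredPartitions] at ht
    simp only [coe_filter, Set.mem_ofPred_eq, mem_coloredPartitions]
    refine ⟨hn ▸ (isColoredPartition_add_replicate hm c).mpr ht, ?_⟩
    simp
  · intro s hs
    simp only [coe_filter, Set.mem_ofPred_eq, Multiset.le_count_iff_replicate_le] at hs
    exact tsub_add_cancel_of_le hs.2
  · intro t _
    exact add_tsub_cancel_right _ _

theorem IsColoredPartition.eq_sum_count_mul (hs : IsColoredPartition n s) :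
    n = ∑ x ∈ Icc 1 n ×ˢ (univ : Finset (Fin k)), s.count x * x.1 := by
  conv_lhs => rw [← hs.2, sum_multiset_map_count]
  simp only [smul_eq_mul]
  refine sum_subset (fun x hx => ?_) (fun x _ hx => ?_)
  · rw [Multiset.mem_toFinset] at hx
    exact mem_product.mpr ⟨mem_Icc.mpr ⟨hs.1 x hx, hs.fst_le hx⟩, mem_univ _⟩
  · rw [Multiset.count_eq_zero.mpr (Multiset.mem_toFinset.not.mp hx), zero_mul]

theorem sum_count_coloredPartitions {m : ℕ} (hm : 0 < m) (c : Fin k) :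
    ∑ s ∈ coloredPartitions k n, s.count (m, c) =
      ∑ j ∈ Icc 1 (n / m), #(coloredPartitions k (n - j * m)) := by
  rw [sum_eq_sum_Icc_card_filter_le _ _ (n / m) fun s hs =>
    (Nat.le_div_iff_mul_le hm).mpr ((mem_coloredPartitions.mp hs).count_mul_le m c)]
  exact sum_congr rfl fun j hj =>
    card_filter_le_count_coloredPartitions hm ((Nat.le_div_iff_mul_le hm).mp (mem_Icc.mp hj).2) c

open ArithmeticFunction ArithmeticFunction.sigma in
theorem mul_card_coloredPartitions (k n : ℕ) :
    n * #(coloredPartitions k n) =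
      k * ∑ ℓ ∈ Icc 1 n, σ 1 ℓ * #(coloredPartitions k (n - ℓ)) := by
  calc n * #(coloredPartitions k n)
      = ∑ s ∈ coloredPartitions k n, ∑ x ∈ Icc 1 n ×ˢ univ, s.count x * x.1 := by
        rw [mul_comm, ← smul_eq_mul, ← sum_const]
        exact sum_congr rfl fun s hs => (mem_coloredPartitions.mp hs).eq_sum_count_mul
    _ = ∑ m ∈ Icc 1 n, ∑ _c : Fin k,
          ∑ j ∈ Icc 1 (n / m), m * #(coloredPartitions k (n - m * j)) := by
        rw [sum_comm, sum_product]
        refine sum_congr rfl fun m hm => sum_congr rfl fun c _ => ?_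
        rw [← sum_mul, sum_count_coloredPartitions (mem_Icc.mp hm).1, sum_mul]
        exact sum_congr rfl fun j _ => by rw [mul_comm, mul_comm j]
    _ = k * ∑ m ∈ Icc 1 n, ∑ j ∈ Icc 1 (n / m), m * #(coloredPartitions k (n - m * j)) := by
        simp only [sum_const, card_univ, Fintype.card_fin, smul_eq_mul, mul_sum]
    _ = k * ∑ ℓ ∈ Icc 1 n, σ 1 ℓ * #(coloredPartitions k (n - ℓ)) := by
        rw [Nat.sum_Icc_sum_Icc_div_eq_sum_Icc_sum_divisors
          (fun d ℓ => d * #(coloredPartitions k (n - ℓ)))]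
        simp only [sigma_one_apply, sum_mul]

end ColoredPartitions

open ArithmeticFunction ArithmeticFunction.sigma in
theorem coloredPartition_succ (k n : ℕ) :
    (coloredPartition k (n + 1) : ℝ) = k / (n + 1) *
      ∑ ℓ ∈ Icc 1 (n + 1), (∑ i ∈ ℓ.divisors, (i : ℝ)) * coloredPartition k (n + 1 - ℓ) := by
  have h := congrArg (Nat.cast (R := ℝ)) (mul_card_coloredPartitions k (n + 1))
  simp only [Nat.cast_mul, Nat.cast_sum, sigma_one_apply, ← coloredPartition_eq_card] at h
  push_cast at h
  field_simp
  linear_combination h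

theorem pLower_le_coloredPartition_general (k : ℕ) (d : ℕ → ℕ) (hdj : ∀ j, 1 ≤ j → d j ≤ j) :
    ∀ n : ℕ, pLower k d n ≤ coloredPartition k n := by
  intro n
  induction n using Nat.strong_induction_on with
  | _ n ih =>
  rcases n with _ | n
  · simp [pLower, coloredPartition_eq_card, coloredPartitions_zero]
  rw [pLower, sum_attach (Icc 1 (d (n + 1)))
    (fun ℓ => (∑ i ∈ ℓ.divisors, (i : ℝ)) * pLower k d (n + 1 - ℓ)), coloredPartition_succ]
  gcongr
  calc ∑ ℓ ∈ Icc 1 (d (n + 1)), (∑ i ∈ ℓ.divisors, (i : ℝ)) * pLower k d (n + 1 - ℓ)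
      ≤ ∑ ℓ ∈ Icc 1 (d (n + 1)), (∑ i ∈ ℓ.divisors, (i : ℝ)) * coloredPartition k (n + 1 - ℓ) := by
        gcongr with ℓ hℓ
        exact ih _ (by have := (mem_Icc.mp hℓ).1; omega)
    _ ≤ ∑ ℓ ∈ Icc 1 (n + 1), (∑ i ∈ ℓ.divisors, (i : ℝ)) * coloredPartition k (n + 1 - ℓ) :=
        sum_le_sum_of_subset_of_nonneg (Icc_subset_Icc_right (hdj _ n.succ_pos))
          fun _ _ _ => by positivity

theorem pLower_le_coloredPartition (k : ℕ) (hk : 1 ≤ k) (d : ℕ → ℕ)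
    (hd1 : ∀ j, 1 ≤ j → 1 ≤ d j) (hdj : ∀ j, 1 ≤ j → d j ≤ j) :
    ∀ n : ℕ, pLower k d n ≤ coloredPartition k n :=
  pLower_le_coloredPartition_general k d hdj
end

section
/- Let k be a positive integer and (d_j)_{j≥1} a sequence of positive integers with d_j ≤ j. Define p⁺(0) = 1, p⁺(n) = 0 for n < 0, and p⁺(n) = (k/n)·∑_{ℓ=1}^{d_n} σ(ℓ)·p⁺(n-ℓ) + k·n·p⁺(n - d_n - 1) for n ≥ 1. Then p_k(n) ≤ p⁺(n) for all n ≥ 0. -/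
open Finset

/-! Auxiliary development for counting colored partitions. -/

abbrev CPt (k n : ℕ) := {s : Multiset (ℕ × Fin k) //
    (∀ x ∈ s, 0 < x.1) ∧ (s.map Prod.fst).sum = n}

lemma natCard_eq (α : Type*) [Fintype α] : Nat.card α = Fintype.card α := by
  simp [Nat.card]

lemma msum_le {s t : Multiset ℕ} (h : s ≤ t) : s.sum ≤ t.sum := by
  obtain ⟨u, rfl⟩ := Multiset.le_iff_exists_add.mp h
  simp

lemma cp_card_le {k n : ℕ} (s : CPt k n) : Multiset.card s.1 ≤ n := by
  have h1 : Multiset.card (s.1.map Prod.fst) • 1 ≤ (s.1.map Prod.fst).sum :=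
    Multiset.card_nsmul_le_sum (by
      intro y hy
      obtain ⟨z, hz, rfl⟩ := Multiset.mem_map.mp hy
      exact s.2.1 z hz)
  simpa [s.2.2] using h1

lemma cp_fst_le {k n : ℕ} (s : CPt k n) {x : ℕ × Fin k} (hx : x ∈ s.1) : x.1 ≤ n := by
  have h : x.1 ∈ s.1.map Prod.fst := Multiset.mem_map_of_mem _ hx
  calc x.1 ≤ (s.1.map Prod.fst).sum := Multiset.le_sum_of_mem h
  _ = n := s.2.2

lemma cp_finite (k n : ℕ) : Finite (CPt k n) := by
  classical
  set t : Multiset (ℕ × Fin k) := n • ((Finset.Icc 1 n) ×ˢ (Finset.univ : Finset (Fin k))).val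
    with ht
  have key : ∀ s : CPt k n, s.1 ≤ t := by
    rintro s
    rw [Multiset.le_iff_count]
    intro x
    by_cases hx : x ∈ s.1
    · have hmem : x ∈ ((Finset.Icc 1 n) ×ˢ (Finset.univ : Finset (Fin k))) :=
        Finset.mem_product.mpr ⟨Finset.mem_Icc.mpr ⟨s.2.1 x hx, cp_fst_le s hx⟩,
          Finset.mem_univ _⟩
      calc Multiset.count x s.1 ≤ Multiset.card s.1 := Multiset.count_le_card x s.1
      _ ≤ n := cp_card_le s
      _ ≤ Multiset.count x t := by
          have hc1 : Multiset.count x ((Finset.Icc 1 n) ×ˢ (Finset.univ : Finset (Fin k))).val = 1 :=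
            Multiset.count_eq_one_of_mem ((Finset.Icc 1 n) ×ˢ (Finset.univ : Finset (Fin k))).nodup hmem
          rw [ht, Multiset.count_nsmul, hc1, mul_one]
    · simp [Multiset.count_eq_zero_of_notMem hx]
  have : Finite {u : Multiset (ℕ × Fin k) // u ∈ t.powerset} :=
    (Multiset.finite_toSet t.powerset).to_subtype
  exact Finite.of_injective
    (fun s : CPt k n => (⟨s.1, Multiset.mem_powerset.mpr (key s)⟩ : {u // u ∈ t.powerset}))
    (fun a b hab => Subtype.ext (by simpa using congrArg Subtype.val hab))

lemma cp_zero (k : ℕ) : Nat.card (CPt k 0) = 1 := by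
  have : Unique (CPt k 0) := by
    refine ⟨⟨⟨0, by simp, by simp⟩⟩, ?_⟩
    rintro ⟨s, hpos, hsum⟩
    ext : 1
    simp only
    by_contra hne
    obtain ⟨x, hx⟩ := Multiset.exists_mem_of_ne_zero (by simpa using hne)
    have h1 : 0 < x.1 := hpos x hx
    have h2 : x.1 ≤ (s.map Prod.fst).sum := Multiset.le_sum_of_mem (Multiset.mem_map_of_mem _ hx)
    omega
  exact Nat.card_eq_one_iff_unique.mpr ⟨inferInstance, inferInstance⟩

lemma cp_mono (k : ℕ) (hk : 1 ≤ k) (n : ℕ) : Nat.card (CPt k n) ≤ Nat.card (CPt k (n+1)) := by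
  have := cp_finite k (n+1)
  refine Nat.card_le_card_of_injective (fun s : CPt k n =>
    (⟨s.1 + {(1, ⟨0, hk⟩)}, ?_, ?_⟩ : CPt k (n+1))) ?_
  · intro x hx
    rcases Multiset.mem_add.mp hx with h | h
    · exact s.2.1 x h
    · simp at h; subst h; norm_num
  · simp [s.2.2]
  · intro a b hab
    simp only [Subtype.mk.injEq] at hab
    exact Subtype.ext (add_right_cancel hab)

lemma cp_mono' (k : ℕ) (hk : 1 ≤ k) {a b : ℕ} (h : a ≤ b) :
    Nat.card (CPt k a) ≤ Nat.card (CPt k b) := by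
  induction b with
  | zero => simp_all
  | succ b ih =>
    rcases Nat.lt_or_ge a (b+1) with h' | h'
    · exact le_trans (ih (by omega)) (cp_mono k hk b)
    · have : a = b + 1 := by omega
      subst this; exact le_rfl

lemma repl_le {k : ℕ} (m : ℕ) (c : Fin k) (j : ℕ) (s : Multiset (ℕ × Fin k))
    (h : j ≤ s.count (m, c)) : Multiset.replicate j (m, c) ≤ s :=
  Multiset.le_iff_count.mpr (by
    intro x
    rcases eq_or_ne x (m, c) with rfl | hx
    · simpa using h
    · simp [Multiset.count_replicate, hx.symm])

noncomputable def cpEquiv (k : ℕ) (m : ℕ) (hm : 1 ≤ m) (c : Fin k) (j n : ℕ)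
    (h : m * j ≤ n) :
    {s : CPt k n // j ≤ s.1.count (m, c)} ≃ CPt k (n - m * j) where
  toFun s := ⟨s.1.1 - Multiset.replicate j (m, c), by
      intro x hx
      exact s.1.2.1 x (Multiset.mem_of_le (Multiset.sub_le_self _ _) hx), by
      have hle : Multiset.replicate j (m, c) ≤ s.1.1 := repl_le m c j s.1.1 s.2
      have hsplit : s.1.1 - Multiset.replicate j (m, c) + Multiset.replicate j (m, c) = s.1.1 :=
        tsub_add_cancel_of_le hle
      have h2 := congrArg (fun u => (Multiset.map Prod.fst u).sum) hsplit
      simp only [Multiset.map_add, Multiset.sum_add, Multiset.map_replicate,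
        Multiset.sum_replicate, smul_eq_mul] at h2
      rw [s.1.2.2, mul_comm j m] at h2
      omega⟩
  invFun t := ⟨⟨t.1 + Multiset.replicate j (m, c), by
      intro x hx
      rcases Multiset.mem_add.mp hx with hx | hx
      · exact t.2.1 x hx
      · rw [Multiset.eq_of_mem_replicate hx]; exact hm, by
      simp only [Multiset.map_add, Multiset.sum_add, Multiset.map_replicate,
        Multiset.sum_replicate, smul_eq_mul, t.2.2, mul_comm j m]
      omega⟩, by
      simp [Multiset.count_replicate]⟩
  left_inv s := by
    apply Subtype.ext; apply Subtype.ext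
    exact tsub_add_cancel_of_le (repl_le m c j s.1.1 s.2)
  right_inv t := by
    apply Subtype.ext
    simp

lemma reindex (N : ℕ) (f : ℕ → ℕ → ℕ) :
    ∑ m ∈ Icc 1 N, ∑ j ∈ Icc 1 N, (if m * j ≤ N then f m (m * j) else 0)
      = ∑ ℓ ∈ Icc 1 N, ∑ p ∈ Nat.divisorsAntidiagonal ℓ, f p.1 ℓ := by
  classical
  have hset : ((Icc 1 N) ×ˢ (Icc 1 N)).filter (fun p : ℕ × ℕ => p.1 * p.2 ≤ N)
      = (Icc 1 N).biUnion (fun ℓ => Nat.divisorsAntidiagonal ℓ) := by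
    ext ⟨m, j⟩
    simp only [Finset.mem_filter, Finset.mem_product, Finset.mem_Icc, Finset.mem_biUnion,
      Nat.mem_divisorsAntidiagonal]
    constructor
    · rintro ⟨⟨⟨hm1, hmN⟩, ⟨hj1, hjN⟩⟩, hle⟩
      exact ⟨m * j, ⟨Nat.mul_pos hm1 hj1, hle⟩, rfl, (Nat.mul_pos hm1 hj1).ne'⟩
    · rintro ⟨ℓ, ⟨hl1, hlN⟩, rfl, -⟩
      have hm1 : 1 ≤ m := by
        rcases Nat.eq_zero_or_pos m with rfl | h
        · simp at hl1
        · exact h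
      have hj1 : 1 ≤ j := by
        rcases Nat.eq_zero_or_pos j with rfl | h
        · simp at hl1
        · exact h
      have hmN : m ≤ N := le_trans (Nat.le_mul_of_pos_right m hj1) hlN
      have hjN : j ≤ N := le_trans (Nat.le_mul_of_pos_left j hm1) hlN
      exact ⟨⟨⟨hm1, hmN⟩, hj1, hjN⟩, hlN⟩
  have hdisj : (↑(Icc 1 N) : Set ℕ).PairwiseDisjoint (fun ℓ => Nat.divisorsAntidiagonal ℓ) := by
    intro a _ b _ hab
    simp only [Function.onFun, Finset.disjoint_left]
    intro p hp1 hp2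
    exact hab ((Nat.mem_divisorsAntidiagonal.mp hp1).1.symm.trans
      (Nat.mem_divisorsAntidiagonal.mp hp2).1)
  calc ∑ m ∈ Icc 1 N, ∑ j ∈ Icc 1 N, (if m * j ≤ N then f m (m * j) else 0)
      = ∑ p ∈ (Icc 1 N) ×ˢ (Icc 1 N), (if p.1 * p.2 ≤ N then f p.1 (p.1 * p.2) else 0) := by
        rw [Finset.sum_product]
    _ = ∑ p ∈ ((Icc 1 N) ×ˢ (Icc 1 N)).filter (fun p : ℕ × ℕ => p.1 * p.2 ≤ N),
          f p.1 (p.1 * p.2) := (Finset.sum_filter _ _).symm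
    _ = ∑ p ∈ (Icc 1 N).biUnion (fun ℓ => Nat.divisorsAntidiagonal ℓ), f p.1 (p.1 * p.2) := by
        rw [hset]
    _ = ∑ ℓ ∈ Icc 1 N, ∑ p ∈ Nat.divisorsAntidiagonal ℓ, f p.1 (p.1 * p.2) :=
        Finset.sum_biUnion hdisj
    _ = ∑ ℓ ∈ Icc 1 N, ∑ p ∈ Nat.divisorsAntidiagonal ℓ, f p.1 ℓ := by
        refine Finset.sum_congr rfl fun ℓ _ => Finset.sum_congr rfl fun p hp => by
          rw [(Nat.mem_divisorsAntidiagonal.mp hp).1]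

lemma sigma_sum_le (N : ℕ) : ∑ ℓ ∈ Icc 1 N, (∑ i ∈ Nat.divisors ℓ, i) ≤ N * N := by
  classical
  have h1 : ∀ ℓ : ℕ, ∑ p ∈ Nat.divisorsAntidiagonal ℓ, p.1 = ∑ i ∈ Nat.divisors ℓ, i := by
    intro ℓ
    exact Nat.sum_divisorsAntidiagonal (fun i _ => i)
  have h2 := (reindex N (fun m _ => m)).symm
  simp only [h1] at h2
  rw [h2]
  have hin : ∀ m ∈ Icc 1 N, ∑ j ∈ Icc 1 N, (if m * j ≤ N then m else 0) ≤ N := by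
    intro m hm
    have hm1 : 1 ≤ m := (Finset.mem_Icc.mp hm).1
    have hfil : (Icc 1 N).filter (fun j => m * j ≤ N) = Icc 1 (N / m) := by
      ext j
      simp only [Finset.mem_filter, Finset.mem_Icc]
      constructor
      · rintro ⟨⟨hj1, hjN⟩, hle⟩
        exact ⟨hj1, Nat.le_div_iff_mul_le hm1 |>.mpr (by rwa [mul_comm])⟩
      · rintro ⟨hj1, hjd⟩
        have := Nat.le_div_iff_mul_le hm1 |>.mp hjd
        exact ⟨⟨hj1, le_trans hjd (Nat.div_le_self _ _)⟩, by rwa [mul_comm] at this⟩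
    rw [← Finset.sum_filter, hfil]
    simp only [Finset.sum_const, Nat.card_Icc, smul_eq_mul]
    simpa using Nat.div_mul_le_self N m
  calc ∑ m ∈ Icc 1 N, ∑ j ∈ Icc 1 N, (if m * j ≤ N then m else 0)
      ≤ ∑ m ∈ Icc 1 N, N := Finset.sum_le_sum hin
    _ ≤ N * N := by
        simp only [Finset.sum_const, Nat.card_Icc, smul_eq_mul]
        exact Nat.mul_le_mul_right N (by omega)

lemma cp_rec (k N : ℕ) :
    N * Nat.card (CPt k N) =
      k * ∑ ℓ ∈ Icc 1 N, (∑ i ∈ Nat.divisors ℓ, i) * Nat.card (CPt k (N - ℓ)) := by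
  classical
  have : Fintype (CPt k N) := @Fintype.ofFinite _ (cp_finite k N)
  set S : Finset (ℕ × Fin k) := Icc 1 N ×ˢ Finset.univ with hS
  have e1 : ∀ s : CPt k N, N = ∑ x ∈ S, Multiset.count x s.1 * x.1 := by
    intro s
    conv_lhs => rw [← s.2.2, Finset.sum_multiset_map_count]
    refine Finset.sum_subset ?_ ?_
    · intro x hx
      have hxs : x ∈ s.1 := Multiset.mem_toFinset.mp hx
      exact Finset.mem_product.mpr ⟨Finset.mem_Icc.mpr ⟨s.2.1 x hxs, cp_fst_le s hxs⟩,
        Finset.mem_univ _⟩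
    · intro x _ hx
      simp [Multiset.count_eq_zero_of_notMem (fun h => hx (Multiset.mem_toFinset.mpr h))]
  have e2 : ∀ (s : CPt k N) (x : ℕ × Fin k), Multiset.count x s.1 * x.1
      = ∑ j ∈ Icc 1 N, (if j ≤ Multiset.count x s.1 then x.1 else 0) := by
    intro s x
    have hcnt : Multiset.count x s.1 ≤ N :=
      le_trans (Multiset.count_le_card x s.1) (cp_card_le s)
    rw [← Finset.sum_filter]
    have hfil : Finset.filter (fun j => j ≤ Multiset.count x s.1) (Icc 1 N)
        = Icc 1 (Multiset.count x s.1) := by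
      ext j; simp only [Finset.mem_filter, Finset.mem_Icc]; omega
    rw [hfil, Finset.sum_const, Nat.card_Icc, smul_eq_mul, Nat.add_sub_cancel]
  have e3 : ∀ (m : ℕ) (c : Fin k) (j : ℕ), 1 ≤ m → 1 ≤ j →
      ∑ s : CPt k N, (if j ≤ Multiset.count (m, c) s.1 then m else 0)
        = m * (if m * j ≤ N then Nat.card (CPt k (N - m * j)) else 0) := by
    intro m c j hm hj
    rw [← Finset.sum_filter, Finset.sum_const, smul_eq_mul]
    have hcardeq : (Finset.univ.filter (fun s : CPt k N => j ≤ Multiset.count (m, c) s.1)).card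
        = Nat.card {s : CPt k N // j ≤ Multiset.count (m, c) s.1} := by
      rw [natCard_eq, Fintype.card_subtype]
    rw [hcardeq]
    by_cases hle : m * j ≤ N
    · rw [if_pos hle, Nat.card_congr (cpEquiv k m hm c j N hle), mul_comm]
    · rw [if_neg hle, mul_zero]
      have : IsEmpty {s : CPt k N // j ≤ Multiset.count (m, c) s.1} := by
        refine ⟨fun s => hle ?_⟩
        have hrep := repl_le m c j s.1.1 s.2
        have hmap := Multiset.map_le_map (f := Prod.fst) hrep
        have hsum := msum_le hmap
        simp only [Multiset.map_replicate, Multiset.sum_replicate, smul_eq_mul,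
          s.1.2.2] at hsum
        rw [mul_comm]; exact hsum
      rw [Nat.card_of_isEmpty, zero_mul]
  have key : N * Nat.card (CPt k N)
      = ∑ m ∈ Icc 1 N, ∑ j ∈ Icc 1 N,
          (if m * j ≤ N then k * (m * Nat.card (CPt k (N - m * j))) else 0) := by
    calc N * Nat.card (CPt k N) = ∑ _s : CPt k N, N := by
          rw [Finset.sum_const, smul_eq_mul, natCard_eq, ← Finset.card_univ, mul_comm]
    _ = ∑ s : CPt k N, ∑ x ∈ S, Multiset.count x s.1 * x.1 :=
          Finset.sum_congr rfl fun s _ => e1 s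
    _ = ∑ x ∈ S, ∑ s : CPt k N, Multiset.count x s.1 * x.1 := Finset.sum_comm
    _ = ∑ x ∈ S, ∑ s : CPt k N, ∑ j ∈ Icc 1 N, (if j ≤ Multiset.count x s.1 then x.1 else 0) :=
          Finset.sum_congr rfl fun x _ => Finset.sum_congr rfl fun s _ => e2 s x
    _ = ∑ x ∈ S, ∑ j ∈ Icc 1 N, ∑ s : CPt k N, (if j ≤ Multiset.count x s.1 then x.1 else 0) :=
          Finset.sum_congr rfl fun x _ => Finset.sum_comm
    _ = ∑ x ∈ S, ∑ j ∈ Icc 1 N,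
          x.1 * (if x.1 * j ≤ N then Nat.card (CPt k (N - x.1 * j)) else 0) := by
          refine Finset.sum_congr rfl fun x hx => Finset.sum_congr rfl fun j hj => ?_
          obtain ⟨m, c⟩ := x
          exact e3 m c j (Finset.mem_Icc.mp (Finset.mem_product.mp hx).1).1
            (Finset.mem_Icc.mp hj).1
    _ = ∑ m ∈ Icc 1 N, ∑ _c : Fin k, ∑ j ∈ Icc 1 N,
          m * (if m * j ≤ N then Nat.card (CPt k (N - m * j)) else 0) := by
          rw [hS, Finset.sum_product]
    _ = ∑ m ∈ Icc 1 N, ∑ j ∈ Icc 1 N,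
          (if m * j ≤ N then k * (m * Nat.card (CPt k (N - m * j))) else 0) := by
          refine Finset.sum_congr rfl fun m _ => ?_
          rw [Finset.sum_const, Finset.card_univ, Fintype.card_fin, smul_eq_mul,
            Finset.mul_sum]
          refine Finset.sum_congr rfl fun j _ => ?_
          rw [mul_ite, mul_ite, mul_zero, mul_zero]
  rw [key, reindex N (fun m ℓ => k * (m * Nat.card (CPt k (N - ℓ)))), Finset.mul_sum]
  refine Finset.sum_congr rfl fun ℓ _ => ?_
  have hσ : ∑ p ∈ Nat.divisorsAntidiagonal ℓ, p.1 = ∑ i ∈ Nat.divisors ℓ, i :=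
    Nat.sum_divisorsAntidiagonal (fun i _ => i)
  calc ∑ p ∈ Nat.divisorsAntidiagonal ℓ, k * (p.1 * Nat.card (CPt k (N - ℓ)))
      = k * ((∑ p ∈ Nat.divisorsAntidiagonal ℓ, p.1) * Nat.card (CPt k (N - ℓ))) := by
        rw [Finset.sum_mul, Finset.mul_sum]
    _ = k * ((∑ i ∈ Nat.divisors ℓ, i) * Nat.card (CPt k (N - ℓ))) := by rw [hσ]



/-- The upper approximating sequence `p⁺_{k,d}`; the term
`k·n·p⁺(n - dₙ - 1)` is taken to be `0` when `n - dₙ - 1 < 0`. -/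
noncomputable def pUpper (k : ℕ) (d : ℕ → ℕ) : ℕ → ℝ
  | 0 => 1
  | n + 1 =>
    (k : ℝ) / (n + 1) * ∑ ℓ ∈ (Finset.Icc 1 (d (n + 1))).attach,
      (∑ i ∈ Nat.divisors ℓ.1, (i : ℝ)) * pUpper k d (n + 1 - ℓ.1)
    + (if d (n + 1) < n + 1 then (k : ℝ) * (n + 1) * pUpper k d (n - d (n + 1)) else 0)
  decreasing_by
    · have := (Finset.mem_Icc.mp ℓ.2).1; omega
    · omega

theorem coloredPartition_le_pUpper (k : ℕ) (hk : 1 ≤ k) (d : ℕ → ℕ)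
    (hd1 : ∀ j, 1 ≤ j → 1 ≤ d j) (hdj : ∀ j, 1 ≤ j → d j ≤ j) :
    ∀ n : ℕ, (coloredPartition k n : ℝ) ≤ pUpper k d n := by
  intro n
  induction n using Nat.strong_induction_on with
  | _ n ih =>
    rcases n with _ | M
    · rw [pUpper]
      show ((Nat.card (CPt k 0) : ℕ) : ℝ) ≤ 1
      rw [cp_zero]; norm_num
    · -- notation
      set D := d (M + 1) with hD
      have hD1 : 1 ≤ D := hd1 (M + 1) (by omega)
      have hDN : D ≤ M + 1 := hdj (M + 1) (by omega)
      set A : ℕ := ∑ ℓ ∈ Icc 1 D, (∑ i ∈ Nat.divisors ℓ, i) * Nat.card (CPt k (M + 1 - ℓ))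
        with hA
      set B : ℕ := ∑ ℓ ∈ Ioc D (M + 1), (∑ i ∈ Nat.divisors ℓ, i) * Nat.card (CPt k (M + 1 - ℓ))
        with hB
      have hun : Icc 1 D ∪ Ioc D (M + 1) = Icc 1 (M + 1) := by
        ext a
        simp only [Finset.mem_union, Finset.mem_Icc, Finset.mem_Ioc]
        omega
      have hdis : Disjoint (Icc 1 D) (Ioc D (M + 1)) := by
        rw [Finset.disjoint_left]
        intro a ha ha'
        simp only [Finset.mem_Icc, Finset.mem_Ioc] at ha ha'
        omega
      have hAB : (M + 1) * Nat.card (CPt k (M + 1)) = k * (A + B) := by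
        rw [cp_rec, ← hun, Finset.sum_union hdis]
      set C : ℕ := Nat.card (CPt k (M - D)) with hC
      have hBle : B ≤ (M + 1) * (M + 1) * C := by
        calc B ≤ ∑ ℓ ∈ Ioc D (M + 1), (∑ i ∈ Nat.divisors ℓ, i) * C := by
              refine Finset.sum_le_sum fun ℓ hℓ => ?_
              have hmem := Finset.mem_Ioc.mp hℓ
              exact Nat.mul_le_mul_left _ (cp_mono' k hk (by omega))
          _ = (∑ ℓ ∈ Ioc D (M + 1), (∑ i ∈ Nat.divisors ℓ, i)) * C := by
              rw [Finset.sum_mul]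
          _ ≤ (∑ ℓ ∈ Icc 1 (M + 1), (∑ i ∈ Nat.divisors ℓ, i)) * C := by
              refine Nat.mul_le_mul_right _ (Finset.sum_le_sum_of_subset ?_)
              intro a ha
              simp only [Finset.mem_Ioc] at ha
              simp only [Finset.mem_Icc]
              omega
          _ ≤ (M + 1) * (M + 1) * C := Nat.mul_le_mul_right _ (sigma_sum_le (M + 1))
      -- real versions
      have hNpos : (0 : ℝ) < (M + 1 : ℝ) := by positivity
      have hkN : (0 : ℝ) ≤ (k : ℝ) / (M + 1 : ℝ) := by positivity
      have hABℝ : ((M + 1 : ℝ)) * (Nat.card (CPt k (M + 1)) : ℝ)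
          = (k : ℝ) * ((A : ℝ) + (B : ℝ)) := by exact_mod_cast hAB
      have hcp : (Nat.card (CPt k (M + 1)) : ℝ)
          = (k : ℝ) / (M + 1) * (A : ℝ) + (k : ℝ) / (M + 1) * (B : ℝ) := by
        field_simp
        linarith
      -- bound the head term
      have hhead : (k : ℝ) / (M + 1) * (A : ℝ)
          ≤ (k : ℝ) / (M + 1) * ∑ ℓ ∈ Icc 1 D,
              (∑ i ∈ Nat.divisors ℓ, (i : ℝ)) * pUpper k d (M + 1 - ℓ) := by
        refine mul_le_mul_of_nonneg_left ?_ hkN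
        rw [hA]
        push_cast
        refine Finset.sum_le_sum fun ℓ hℓ => ?_
        have hℓ1 : 1 ≤ ℓ := (Finset.mem_Icc.mp hℓ).1
        refine mul_le_mul_of_nonneg_left ?_ (by positivity)
        exact ih (M + 1 - ℓ) (by omega)
      -- bound the tail term
      have htail : (k : ℝ) / (M + 1) * (B : ℝ)
          ≤ (k : ℝ) * (M + 1) * pUpper k d (M - D) := by
        have h1 : (B : ℝ) ≤ ((M + 1) * (M + 1) * C : ℕ) := by exact_mod_cast hBle
        have h2 : (k : ℝ) / (M + 1) * (B : ℝ)
            ≤ (k : ℝ) / (M + 1) * (((M + 1) * (M + 1) * C : ℕ) : ℝ) :=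
          mul_le_mul_of_nonneg_left h1 hkN
        have h3 : (k : ℝ) / (M + 1) * (((M + 1) * (M + 1) * C : ℕ) : ℝ)
            = (k : ℝ) * (M + 1) * (C : ℝ) := by
          push_cast
          field_simp
        have h4 : (C : ℝ) ≤ pUpper k d (M - D) := ih (M - D) (by omega)
        calc (k : ℝ) / (M + 1) * (B : ℝ) ≤ (k : ℝ) * (M + 1) * (C : ℝ) := by
              rw [← h3]; exact h2
          _ ≤ (k : ℝ) * (M + 1) * pUpper k d (M - D) := by
              refine mul_le_mul_of_nonneg_left h4 (by positivity)
      -- assemble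
      show ((Nat.card (CPt k (M + 1)) : ℕ) : ℝ) ≤ _
      rw [pUpper, Finset.sum_attach (Icc 1 (d (M + 1)))
        (fun ℓ => (∑ i ∈ Nat.divisors ℓ, (i : ℝ)) * pUpper k d (M + 1 - ℓ)), hcp]
      by_cases hcase : D < M + 1
      · rw [if_pos hcase]
        exact add_le_add hhead htail
      · have hDeq : D = M + 1 := by omega
        rw [if_neg hcase]
        have hBzero : B = 0 := by
          rw [hB, hDeq]
          simp
        rw [hBzero]
        simp only [Nat.cast_zero, mul_zero, add_zero]
        exact hhead
end

section
/- For every positive integer k and every nonnegative integer n, p_k(n) ≤ e^{π√(2kn/3)}. -/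
/-!
Recording, for each part size `i ≤ n` and colour `c`, how often `(i, c)` occurs in a coloured
partition of `n` embeds the partitions into `{0, …, n}`-valued vectors of weight `n`. Hence for
`0 ≤ x < 1`, `p_k(n) xⁿ ≤ ∏_{1 ≤ m ≤ n} (1 - x^m)^{-k}`. Expanding `-log (1 - y) = ∑ yʲ / j`
and using `1 - xʲ ≥ j xʲ⁻¹ (1 - x)` gives `∑_m -log (1 - x^m) ≤ ζ(2) x / (1 - x)`, so with
`u = x / (1 - x)` and `log (1 / x) ≤ 1 / u`, `log p_k(n) ≤ n / u + k ζ(2) u`; optimising in `u`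
gives the bound.
-/

open Real

open Finset

section PartCount

variable {α : Type*} [DecidableEq α] {n : ℕ} {s t : Multiset (ℕ × α)}

def partCount (n : ℕ) (s : Multiset (ℕ × α)) (p : Fin n × α) : ℕ :=
  s.count ((p.1 : ℕ) + 1, p.2)

lemma sum_succ_mul_partCount [Fintype α] (hs : ∀ a ∈ s, 0 < a.1 ∧ a.1 ≤ n) :
    ∑ p : Fin n × α, ((p.1 : ℕ) + 1) * partCount n s p = (s.map Prod.fst).sum := by
  let e : Fin n × α ↪ ℕ × α :=
    ⟨fun p => ((p.1 : ℕ) + 1, p.2), fun p q h => by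
      simp only [Prod.mk.injEq, add_left_inj] at h
      exact Prod.ext (Fin.ext h.1) h.2⟩
  have hsupp : s.toFinset ⊆ univ.map e := fun a ha => by
    obtain ⟨hpos, hle⟩ := hs a (Multiset.mem_toFinset.1 ha)
    exact mem_map.2 ⟨(⟨a.1 - 1, by omega⟩, a.2), mem_univ _, Prod.ext (Nat.sub_add_cancel hpos) rfl⟩
  calc ∑ p : Fin n × α, ((p.1 : ℕ) + 1) * partCount n s p
      = ∑ a ∈ univ.map e, a.1 * s.count a := by rw [sum_map]; rfl
    _ = ∑ a ∈ s.toFinset, a.1 * s.count a := by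
        refine (sum_subset hsupp fun a _ ha => ?_).symm
        rw [Multiset.count_eq_zero.2 (mt Multiset.mem_toFinset.2 ha), mul_zero]
    _ = (s.map Prod.fst).sum := by
        rw [sum_multiset_map_count]
        exact sum_congr rfl fun a _ => mul_comm _ _

lemma eq_of_partCount_eq (hs : ∀ a ∈ s, 0 < a.1 ∧ a.1 ≤ n) (ht : ∀ a ∈ t, 0 < a.1 ∧ a.1 ≤ n)
    (h : partCount n s = partCount n t) : s = t := by
  ext ⟨i, c⟩
  by_cases hi : 0 < i ∧ i ≤ n
  · obtain ⟨m, rfl⟩ : ∃ m, i = m + 1 := Nat.exists_eq_add_one.2 hi.1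
    exact congrFun h (⟨m, by omega⟩, c)
  · rw [Multiset.count_eq_zero.2 (mt (hs _) hi), Multiset.count_eq_zero.2 (mt (ht _) hi)]

end PartCount

lemma coloredPartition_le_card_filter (k n : ℕ) :
    coloredPartition k n ≤ #{f ∈ Fintype.piFinset fun _ : Fin n × Fin k => range (n + 1) |
      ∑ p, ((p.1 : ℕ) + 1) * f p = n} := by
  have hparts (s : {s : Multiset (ℕ × Fin k) // (∀ x ∈ s, 0 < x.1) ∧ (s.map Prod.fst).sum = n}) :
      ∀ a ∈ s.1, 0 < a.1 ∧ a.1 ≤ n := fun a ha =>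
    ⟨s.2.1 a ha, s.2.2 ▸ Multiset.le_sum_of_mem (Multiset.mem_map_of_mem _ ha)⟩
  rw [← Nat.card_eq_finsetCard]
  refine Nat.card_le_card_of_injective (fun s => ⟨partCount n s.1, ?_⟩) fun s t hst =>
    Subtype.ext <| eq_of_partCount_eq (hparts s) (hparts t) (congrArg Subtype.val hst)
  have hw := (sum_succ_mul_partCount (hparts s)).trans s.2.2
  refine mem_filter.2 ⟨Fintype.mem_piFinset.2 fun p => mem_range.2 (Nat.lt_succ_of_le ?_), hw⟩
  calc partCount n s.1 p ≤ ((p.1 : ℕ) + 1) * partCount n s.1 p :=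
        Nat.le_mul_of_pos_left _ p.1.1.succ_pos
    _ ≤ n := (single_le_sum (f := fun q => ((q.1 : ℕ) + 1) * partCount n s.1 q)
          (fun _ _ => Nat.zero_le _) (mem_univ p)).trans hw.le

lemma coloredPartition_mul_pow_le {x : ℝ} (hx : 0 ≤ x) (k n : ℕ) :
    (coloredPartition k n : ℝ) * x ^ n ≤
      (∏ m ∈ range n, ∑ j ∈ range (n + 1), x ^ ((m + 1) * j)) ^ k := by
  set A := Fintype.piFinset fun _ : Fin n × Fin k => range (n + 1)
  set w : (Fin n × Fin k → ℕ) → ℕ := fun f => ∑ p, ((p.1 : ℕ) + 1) * f p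
  calc (coloredPartition k n : ℝ) * x ^ n ≤ #{f ∈ A | w f = n} * x ^ n := by
        gcongr
        exact_mod_cast coloredPartition_le_card_filter k n
    _ = ∑ f ∈ A with w f = n, x ^ w f := by
        rw [sum_congr rfl fun f hf => by rw [(mem_filter.1 hf).2], sum_const, nsmul_eq_mul]
    _ ≤ ∑ f ∈ A, x ^ w f :=
        sum_le_sum_of_subset_of_nonneg (filter_subset _ _) fun _ _ _ => by positivity
    _ = ∏ p : Fin n × Fin k, ∑ j ∈ range (n + 1), x ^ (((p.1 : ℕ) + 1) * j) := by
        rw [prod_univ_sum]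
        exact sum_congr rfl fun f _ => (prod_pow_eq_pow_sum _ _ _).symm
    _ = _ := by
        rw [Fintype.prod_prod_type]
        simp [Fin.prod_univ_eq_prod_range (fun m => ∑ j ∈ range (n + 1), x ^ ((m + 1) * j)),
          prod_pow]

lemma succ_mul_pow_mul_one_sub_le {x : ℝ} (h0 : 0 ≤ x) (h1 : x ≤ 1) (j : ℕ) :
    (j + 1) * x ^ j * (1 - x) ≤ 1 - x ^ (j + 1) := by
  calc (j + 1 : ℝ) * x ^ j * (1 - x) = (∑ _i ∈ range (j + 1), x ^ j) * (1 - x) := by simp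
    _ ≤ (∑ i ∈ range (j + 1), x ^ i) * (1 - x) :=
        mul_le_mul_of_nonneg_right (sum_le_sum fun i hi =>
          pow_le_pow_of_le_one h0 h1 (Nat.lt_succ_iff.mp (mem_range.mp hi))) (by linarith)
    _ = 1 - x ^ (j + 1) := geom_sum_mul_neg x (j + 1)

lemma sum_range_pow_succ_le {y : ℝ} (h0 : 0 ≤ y) (h1 : y < 1) (N : ℕ) :
    ∑ m ∈ range N, y ^ (m + 1) ≤ y / (1 - y) := by
  simpa [sum_Ico_eq_sum_range, add_comm] using
    geom_sum_Ico_le_of_lt_one (m := 1) (n := N + 1) h0 h1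

lemma sum_range_pow_succ_pow_succ_div_le {x : ℝ} (h0 : 0 ≤ x) (h1 : x < 1) (N j : ℕ) :
    ∑ m ∈ range N, (x ^ (m + 1)) ^ (j + 1) / (j + 1) ≤ x / (1 - x) * (1 / (j + 1) ^ 2) := by
  set y := x ^ (j + 1)
  have hy1 : y < 1 := pow_lt_one₀ h0 h1 (Nat.succ_ne_zero j)
  have hgeom : ∑ m ∈ range N, (x ^ (m + 1)) ^ (j + 1) ≤ y / (1 - y) := by
    simpa only [y, ← pow_mul, mul_comm] using sum_range_pow_succ_le (by positivity) hy1 N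
  rw [← sum_div]
  calc (∑ m ∈ range N, (x ^ (m + 1)) ^ (j + 1)) / (j + 1) ≤ y / (1 - y) / (j + 1) := by
        gcongr
    _ ≤ x / (1 - x) * (1 / (j + 1) ^ 2) := by
        rw [div_div, div_mul_div_comm, mul_one, div_le_div_iff₀ (by positivity) (by positivity)]
        have := mul_le_mul_of_nonneg_left (succ_mul_pow_mul_one_sub_le h0 h1.le j)
          (by positivity : 0 ≤ x * (j + 1))
        linear_combination this

lemma sum_range_neg_log_one_sub_pow_le {x : ℝ} (h0 : 0 ≤ x) (h1 : x < 1) (N : ℕ) :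
    ∑ m ∈ range N, -log (1 - x ^ (m + 1)) ≤ π ^ 2 / 6 * (x / (1 - x)) := by
  have hlog : ∀ m, HasSum (fun j : ℕ => (x ^ (m + 1)) ^ (j + 1) / (j + 1))
      (-log (1 - x ^ (m + 1))) := fun m =>
    hasSum_pow_div_log_of_abs_lt_one (by
      rw [abs_of_nonneg (by positivity)]; exact pow_lt_one₀ h0 h1 (Nat.succ_ne_zero m))
  have hzeta : HasSum (fun j : ℕ => 1 / ((j : ℝ) + 1) ^ 2) (π ^ 2 / 6) := by
    simpa using (hasSum_nat_add_iff' 1).2 hasSum_zeta_two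
  rw [mul_comm]
  exact hasSum_le (fun j => sum_range_pow_succ_pow_succ_div_le h0 h1 N j)
    (hasSum_sum fun m _ => hlog m) (hzeta.mul_left _)

lemma prod_range_inv_one_sub_pow_le_exp {x : ℝ} (h0 : 0 ≤ x) (h1 : x < 1) (N : ℕ) :
    ∏ m ∈ range N, (1 - x ^ (m + 1))⁻¹ ≤ exp (π ^ 2 / 6 * (x / (1 - x))) := by
  calc ∏ m ∈ range N, (1 - x ^ (m + 1))⁻¹ = exp (∑ m ∈ range N, -log (1 - x ^ (m + 1))) := by
        rw [exp_sum]
        refine prod_congr rfl fun m _ => ?_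
        rw [exp_neg, exp_log (sub_pos.2 (pow_lt_one₀ h0 h1 (Nat.succ_ne_zero m)))]
    _ ≤ _ := exp_le_exp.2 (sum_range_neg_log_one_sub_pow_le h0 h1 N)

lemma coloredPartition_mul_pow_le_exp {x : ℝ} (h0 : 0 ≤ x) (h1 : x < 1) (k n : ℕ) :
    (coloredPartition k n : ℝ) * x ^ n ≤ exp (k * (π ^ 2 / 6 * (x / (1 - x)))) := by
  calc (coloredPartition k n : ℝ) * x ^ n
      ≤ (∏ m ∈ range n, ∑ j ∈ range (n + 1), x ^ ((m + 1) * j)) ^ k :=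
        coloredPartition_mul_pow_le h0 k n
    _ ≤ (∏ m ∈ range n, (1 - x ^ (m + 1))⁻¹) ^ k := by
        gcongr with m
        have := geom_sum_Ico_le_of_lt_one (m := 0) (n := n + 1) (by positivity : 0 ≤ x ^ (m + 1))
          (pow_lt_one₀ h0 h1 (Nat.succ_ne_zero m))
        rw [← range_eq_Ico, pow_zero, one_div] at this
        simpa only [pow_mul] using this
    _ ≤ exp (π ^ 2 / 6 * (x / (1 - x))) ^ k := by
        gcongr
        · exact prod_nonneg fun m _ => inv_nonneg.2 (sub_nonneg.2 (pow_le_one₀ h0 h1.le))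
        · exact prod_range_inv_one_sub_pow_le_exp h0 h1 n
    _ = exp (k * (π ^ 2 / 6 * (x / (1 - x)))) := (exp_nat_mul _ _).symm

lemma coloredPartition_le_exp_div_add_mul {u : ℝ} (hu : 0 < u) (k n : ℕ) :
    (coloredPartition k n : ℝ) ≤ exp (n / u + k * (π ^ 2 / 6 * u)) := by
  set x := u / (1 + u) with hx
  have hx0 : 0 ≤ x := by positivity
  have hx1 : x < 1 := (div_lt_one (by positivity)).2 (by linarith)
  have hxu : x / (1 - x) = u := by rw [hx]; field_simp; ring
  have hxinv : x⁻¹ = 1 / u + 1 := by rw [hx]; field_simp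
  calc (coloredPartition k n : ℝ) = coloredPartition k n * x ^ n * (x⁻¹) ^ n := by
        rw [mul_assoc, ← mul_pow, mul_inv_cancel₀ (by positivity), one_pow, mul_one]
    _ ≤ exp (k * (π ^ 2 / 6 * u)) * exp (1 / u) ^ n := by
        gcongr
        · simpa [hxu] using coloredPartition_mul_pow_le_exp hx0 hx1 k n
        · exact hxinv ▸ add_one_le_exp _
    _ = exp (n / u + k * (π ^ 2 / 6 * u)) := by
        rw [← exp_nat_mul, ← exp_add, add_comm, mul_one_div]

theorem coloredPartition_le_exp (k n : ℕ) (hk : 1 ≤ k) :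
    (coloredPartition k n : ℝ) ≤ Real.exp (π * Real.sqrt (2 * k * n / 3)) := by
  rcases n.eq_zero_or_pos with rfl | hn
  · -- at `x = 0` the bound reads `p_k(0) ≤ 1`
    simpa using coloredPartition_mul_pow_le_exp le_rfl zero_lt_one k 0
  set r := √(2 * k * n / 3)
  have hr : 0 < r := sqrt_pos.2 (by positivity)
  have hr2 : r ^ 2 = 2 * k * n / 3 := sq_sqrt (by positivity)
  have hk0 : (0 : ℝ) < k := by exact_mod_cast hk
  -- `u = 3 r / (k π)` makes the two terms of `n / u + k ζ(2) u` equal.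
  refine (coloredPartition_le_exp_div_add_mul (u := 3 * r / (k * π)) (by positivity) k n).trans_eq
    ?_
  congr 1
  field_simp
  linear_combination (-9) * hr2
end

section
/- Let κ ≥ 2 be real and define F_κ(X) = ∑_{k≥2} I_κ(X/k) for X > 0, where I_κ is the modified Bessel function of the first kind. Then for all X ≥ 1, F_κ(X) ≤ 4·√(X/π)·e^{X/2}. -/
open Real MeasureTheory

/-!
Two bounds read off the integral representation suffice. Bounding the integrand by `e^x` gives
`I_κ(x) ≤ x² e^x / (2√π)` for `0 ≤ x ≤ 2` (this is where `κ ≥ 2` enters), while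
`1 - t² ≤ 2(1 - t)` turns the integral into a Gamma integral and gives `I_κ(x) ≤ e^x / √(2πx)`.
Using the first bound when `k ≥ X` and the second when `k ≤ X`, the elementary inequality
`x³ ≤ 27 e^(x-3)` yields `k² I_κ(X/k) ≤ 4 √(X/π) e^(X/2)` for every `k ≥ 2`, and
`∑_{k ≥ 2} 1/k² ≤ 1`.
-/

lemma continuous_one_sub_sq_rpow_mul_exp {p : ℝ} (hp : 0 ≤ p) (x : ℝ) :
    Continuous fun t : ℝ => (1 - t ^ 2) ^ p * exp (x * t) :=
  ((continuous_const.sub (continuous_pow 2)).rpow_const fun _ => Or.inr hp).mul (by fun_prop)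

lemma integral_one_sub_sq_rpow_mul_exp_nonneg (p x : ℝ) :
    0 ≤ ∫ t in (-1 : ℝ)..1, (1 - t ^ 2) ^ p * exp (x * t) :=
  intervalIntegral.integral_nonneg (by norm_num) fun _ ⟨ht₁, ht₂⟩ =>
    mul_nonneg (rpow_nonneg (by nlinarith) _) (exp_pos _).le

lemma integral_one_sub_sq_rpow_mul_exp_le_two_mul_exp {p x : ℝ} (hp : 0 ≤ p) (hx : 0 ≤ x) :
    ∫ t in (-1 : ℝ)..1, (1 - t ^ 2) ^ p * exp (x * t) ≤ 2 * exp x := by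
  calc ∫ t in (-1 : ℝ)..1, (1 - t ^ 2) ^ p * exp (x * t)
      ≤ ∫ _ in (-1 : ℝ)..1, 1 * exp x := by
        refine intervalIntegral.integral_mono_on (by norm_num)
          ((continuous_one_sub_sq_rpow_mul_exp hp x).intervalIntegrable _ _)
          intervalIntegrable_const fun t ⟨ht₁, ht₂⟩ => ?_
        gcongr
        · exact rpow_le_one (by nlinarith) (by nlinarith) hp
        · nlinarith
    _ = 2 * exp x := by norm_num

lemma intervalIntegral_rpow_mul_exp_neg_mul_le {p x b : ℝ} (hp : -1 < p) (hx : 0 < x)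
    (hb : 0 ≤ b) :
    ∫ s in (0 : ℝ)..b, s ^ p * exp (-(x * s)) ≤ Gamma (p + 1) / x ^ (p + 1) := by
  have hint : IntegrableOn (fun s : ℝ => s ^ p * exp (-(x * s))) (Set.Ioi 0) := by
    simpa [rpow_one, neg_mul] using
      integrableOn_rpow_mul_exp_neg_mul_rpow (s := p) (p := 1) (b := x) hp one_pos hx
  calc ∫ s in (0 : ℝ)..b, s ^ p * exp (-(x * s))
      ≤ ∫ s in Set.Ioi 0, s ^ p * exp (-(x * s)) := by
        rw [intervalIntegral.integral_of_le hb]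
        refine setIntegral_mono_set hint ?_ Set.Ioc_subset_Ioi_self.eventuallyLE
        filter_upwards [self_mem_ae_restrict measurableSet_Ioi] with s hs
        exact mul_nonneg (rpow_nonneg (le_of_lt hs) _) (exp_pos _).le
    _ = Gamma (p + 1) / x ^ (p + 1) := by
        rw [← add_sub_cancel_right p 1, integral_rpow_mul_exp_neg_mul_Ioi (by linarith) hx,
          add_sub_cancel_right, div_rpow zero_le_one hx.le, one_rpow]
        ring

lemma integral_one_sub_sq_rpow_mul_exp_le {p x : ℝ} (hp : 0 ≤ p) (hx : 0 < x) :
    ∫ t in (-1 : ℝ)..1, (1 - t ^ 2) ^ p * exp (x * t)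
      ≤ 2 ^ p * exp x * (Gamma (p + 1) / x ^ (p + 1)) := by
  calc ∫ t in (-1 : ℝ)..1, (1 - t ^ 2) ^ p * exp (x * t)
      ≤ ∫ t in (-1 : ℝ)..1, 2 ^ p * ((1 - t) ^ p * exp (x * t)) := by
        refine intervalIntegral.integral_mono_on (by norm_num)
          ((continuous_one_sub_sq_rpow_mul_exp hp x).intervalIntegrable _ _)
          ((continuous_const.mul (((continuous_const.sub continuous_id).rpow_const
            fun _ => Or.inr hp).mul (by fun_prop))).intervalIntegrable _ _)
          fun t ⟨ht₁, ht₂⟩ => ?_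
        rw [← mul_assoc, ← mul_rpow (by norm_num) (by linarith)]
        gcongr
        · nlinarith
        · nlinarith
    _ = 2 ^ p * exp x * ∫ s in (0 : ℝ)..2, s ^ p * exp (-(x * s)) := by
        have hsub := intervalIntegral.integral_comp_sub_left (a := -1) (b := 1)
          (fun s => exp x * (s ^ p * exp (-(x * s)))) 1
        norm_num only at hsub
        rw [intervalIntegral.integral_const_mul, mul_assoc,
          ← intervalIntegral.integral_const_mul (exp x), ← hsub]
        congr 1
        refine intervalIntegral.integral_congr fun t _ => ?_
        rw [mul_left_comm, ← exp_add]
        ring_nf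
    _ ≤ 2 ^ p * exp x * (Gamma (p + 1) / x ^ (p + 1)) := by
        gcongr
        exact intervalIntegral_rpow_mul_exp_neg_mul_le (by linarith) hx zero_le_two

lemma besselI_nonneg {κ x : ℝ} (hκ : -(1 / 2) ≤ κ) (hx : 0 ≤ x) : 0 ≤ besselI κ x := by
  have hG := Gamma_nonneg_of_nonneg (s := κ + 1 / 2) (by linarith)
  have hJ := integral_one_sub_sq_rpow_mul_exp_nonneg (κ - 1 / 2) x
  unfold besselI
  positivity

lemma besselI_le_exp_div_sqrt {κ x : ℝ} (hκ : 1 / 2 ≤ κ) (hx : 0 < x) :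
    besselI κ x ≤ exp x / √(2 * π * x) := by
  have hG : 0 < Gamma (κ + 1 / 2) := Gamma_pos_of_pos (by linarith)
  calc besselI κ x
      ≤ (x / 2) ^ κ / (Gamma (κ + 1 / 2) * √π) *
          (2 ^ (κ - 1 / 2) * exp x * (Gamma (κ - 1 / 2 + 1) / x ^ (κ - 1 / 2 + 1))) := by
        unfold besselI
        gcongr
        exact integral_one_sub_sq_rpow_mul_exp_le (by linarith) hx
    _ = exp x / √(2 * π * x) := by
        rw [show κ - 1 / 2 + 1 = κ + 1 / 2 by ring, div_rpow hx.le zero_le_two,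
          rpow_sub two_pos, rpow_add hx, sqrt_eq_rpow, sqrt_eq_rpow,
          mul_rpow (by positivity) hx.le, mul_rpow zero_le_two pi_pos.le]
        field_simp

lemma besselI_le_sq_mul_exp {κ x : ℝ} (hκ : 2 ≤ κ) (hx₀ : 0 ≤ x) (hx₂ : x ≤ 2) :
    besselI κ x ≤ x ^ 2 * exp x / (2 * √π) := by
  have hG : Gamma 2 ≤ Gamma (κ + 1 / 2) :=
    Gamma_strictMonoOn_Ici.monotoneOn (by norm_num) (by simp only [Set.mem_Ici]; linarith)
      (by linarith)
  have hpow : (x / 2) ^ κ ≤ (x / 2) ^ (2 : ℝ) :=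
    rpow_le_rpow_of_exponent_ge' (by positivity) (by linarith) zero_le_two hκ
  have hJ := integral_one_sub_sq_rpow_mul_exp_le_two_mul_exp (p := κ - 1 / 2) (by linarith) hx₀
  calc besselI κ x ≤ (x / 2) ^ (2 : ℝ) / (Gamma 2 * √π) * (2 * exp x) := by
        unfold besselI
        have := integral_one_sub_sq_rpow_mul_exp_nonneg (κ - 1 / 2) x
        gcongr ?_ / (?_ * _) * ?_
    _ = x ^ 2 * exp x / (2 * √π) := by
        rw [rpow_two, Gamma_two]
        field_simp

lemma pow_three_le_mul_exp (x : ℝ) : x ^ 3 ≤ 27 * exp (x - 3) := by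
  have h : x / 3 ≤ exp (x / 3 - 1) := by linarith [add_one_le_exp (x / 3 - 1)]
  calc x ^ 3 = 27 * (x / 3) ^ 3 := by ring
    _ ≤ 27 * exp (x / 3 - 1) ^ 3 :=
        mul_le_mul_of_nonneg_left ((Odd.pow_le_pow ⟨1, rfl⟩).2 h) (by norm_num)
    _ = 27 * exp (x - 3) := by rw [← exp_nat_mul]; ring_nf

lemma le_four_mul_sqrt_div_pi_mul_exp_half {X y : ℝ} (hX : 0 ≤ X)
    (hy : y ^ 2 ≤ 16 * X * exp X / π) : y ≤ 4 * √(X / π) * exp (X / 2) := by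
  calc y ≤ √(16 * X * exp X / π) := (le_abs_self y).trans (abs_le_sqrt hy)
    _ = 4 * √(X / π) * exp (X / 2) := by
        rw [show 16 * X * exp X / π = 4 ^ 2 * (X / π) * exp X by ring, exp_half,
          sqrt_mul (by positivity), sqrt_mul (by positivity), sqrt_sq zero_le_four]

lemma sq_mul_besselI_div_le_of_le {κ X k : ℝ} (hκ : 2 ≤ κ) (hX : 0 ≤ X) (hXk : X ≤ k)
    (hk : 0 < k) : k ^ 2 * besselI κ (X / k) ≤ 4 * √(X / π) * exp (X / 2) := by
  have hx : X / k ≤ 1 := (div_le_one hk).2 hXk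
  calc k ^ 2 * besselI κ (X / k) ≤ k ^ 2 * ((X / k) ^ 2 * exp 1 / (2 * √π)) := by
        gcongr
        refine (besselI_le_sq_mul_exp hκ (by positivity) (by linarith)).trans ?_
        gcongr
    _ = X ^ 2 * exp 1 / (2 * √π) := by field_simp
    _ ≤ 4 * √(X / π) * exp (X / 2) := by
        refine le_four_mul_sqrt_div_pi_mul_exp_half hX ?_
        have h3 : X ^ 3 * exp 2 ≤ 27 * exp X := by
          calc X ^ 3 * exp 2 ≤ 27 * exp (X - 3) * exp 2 := by
                gcongr
                exact pow_three_le_mul_exp X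
            _ = 27 * exp (X - 1) := by rw [mul_assoc, ← exp_add]; ring_nf
            _ ≤ 27 * exp X := by gcongr; linarith
        rw [div_pow, mul_pow, mul_pow, sq_sqrt pi_pos.le, ← exp_nat_mul,
          div_le_div_iff₀ (by positivity) pi_pos]
        have := mul_le_mul_of_nonneg_left h3 (by positivity : 0 ≤ X * π)
        norm_num
        nlinarith [mul_nonneg (mul_nonneg hX pi_pos.le) (exp_pos X).le]

lemma pow_five_mul_exp_div_sq_le {X k : ℝ} (hk : 2 ≤ k) (hkX : k ≤ X) :
    k ^ 5 * exp (X / k) ^ 2 ≤ 27 * X ^ 2 * exp X := by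
  have hexp : exp (X / k) ^ 2 ≤ exp X * exp (2 - k) := by
    rw [sq, ← exp_add, ← exp_add, exp_le_exp]
    have : X + (2 - k) - (X / k + X / k) = (k - 2) * (X - k) / k := by
      field_simp
      ring
    rw [← sub_nonneg, this]
    exact div_nonneg (mul_nonneg (by linarith) (by linarith)) (by linarith)
  have hcube : k ^ 3 * exp (2 - k) ≤ 27 := by
    calc k ^ 3 * exp (2 - k) ≤ 27 * exp (k - 3) * exp (2 - k) := by
          gcongr
          exact pow_three_le_mul_exp k
      _ = 27 * exp (-1) := by rw [mul_assoc, ← exp_add]; ring_nf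
      _ ≤ 27 := by
          have := exp_le_one_iff.2 (show (-1 : ℝ) ≤ 0 by norm_num)
          linarith
  have hsq : k ^ 2 ≤ X ^ 2 := by gcongr
  calc k ^ 5 * exp (X / k) ^ 2 ≤ k ^ 5 * (exp X * exp (2 - k)) := by gcongr
    _ = k ^ 2 * (k ^ 3 * exp (2 - k)) * exp X := by ring
    _ ≤ X ^ 2 * 27 * exp X := by gcongr
    _ = 27 * X ^ 2 * exp X := by ring

lemma sq_mul_besselI_div_le_of_ge {κ X k : ℝ} (hκ : 1 / 2 ≤ κ) (hk : 2 ≤ k) (hkX : k ≤ X) :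
    k ^ 2 * besselI κ (X / k) ≤ 4 * √(X / π) * exp (X / 2) := by
  have hX : 0 < X := by linarith
  have hk₀ : 0 < k := by linarith
  calc k ^ 2 * besselI κ (X / k) ≤ k ^ 2 * (exp (X / k) / √(2 * π * (X / k))) := by
        gcongr
        exact besselI_le_exp_div_sqrt hκ (by positivity)
    _ ≤ 4 * √(X / π) * exp (X / 2) := by
        refine le_four_mul_sqrt_div_pi_mul_exp_half hX.le ?_
        calc (k ^ 2 * (exp (X / k) / √(2 * π * (X / k)))) ^ 2
            = k ^ 5 * exp (X / k) ^ 2 / (2 * π * X) := by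
              rw [mul_pow, div_pow, sq_sqrt (by positivity)]
              field_simp
          _ ≤ 27 * X ^ 2 * exp X / (2 * π * X) := by
              gcongr ?_ / _
              exact pow_five_mul_exp_div_sq_le hk hkX
          _ ≤ 16 * X * exp X / π := by
              rw [div_le_div_iff₀ (by positivity) pi_pos]
              nlinarith [mul_nonneg (mul_nonneg (sq_nonneg X) pi_pos.le) (exp_pos X).le]

lemma sq_mul_besselI_div_le {κ X k : ℝ} (hκ : 2 ≤ κ) (hX : 0 ≤ X) (hk : 2 ≤ k) :
    k ^ 2 * besselI κ (X / k) ≤ 4 * √(X / π) * exp (X / 2) := by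
  rcases le_total X k with hXk | hkX
  · exact sq_mul_besselI_div_le_of_le hκ hX hXk (by linarith)
  · exact sq_mul_besselI_div_le_of_ge (by linarith) hk hkX

lemma tsum_ite_le_of_sq_mul_le {a : ℕ → ℝ} {M : ℝ} (ha : ∀ k : ℕ, 2 ≤ k → 0 ≤ a k)
    (hM : ∀ k : ℕ, 2 ≤ k → (k : ℝ) ^ 2 * a k ≤ M) :
    (∑' k : ℕ, if 2 ≤ k then a k else 0) ≤ M := by
  have hM₀ : 0 ≤ M := (mul_nonneg (sq_nonneg _) (ha 2 le_rfl)).trans (hM 2 le_rfl)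
  refine tsum_le_of_sum_range_le (fun k => by split_ifs with hk; exacts [ha k hk, le_rfl])
    fun n => ?_
  calc ∑ k ∈ Finset.range n, (if 2 ≤ k then a k else 0)
      = ∑ k ∈ Finset.Ioo 1 n, a k := by
        rw [← Finset.sum_filter]
        congr 1
        ext k
        simp only [Finset.mem_filter, Finset.mem_range, Finset.mem_Ioo]
        omega
    _ ≤ ∑ k ∈ Finset.Ioo 1 n, M * ((k : ℝ) ^ 2)⁻¹ := by
        refine Finset.sum_le_sum fun k hk => ?_
        have hk : 2 ≤ k := (Finset.mem_Ioo.1 hk).1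
        rw [← div_eq_mul_inv, le_div_iff₀ (by positivity), mul_comm]
        exact hM k hk
    _ = M * ∑ k ∈ Finset.Ioo 1 n, ((k : ℝ) ^ 2)⁻¹ := (Finset.mul_sum _ _ _).symm
    _ ≤ M * (2 / ((1 : ℕ) + 1)) := by gcongr; exact sum_Ioo_inv_sq_le 1 n
    _ = M := by norm_num

theorem sum_besselI_le (κ : ℝ) (hκ : 2 ≤ κ) (X : ℝ) (hX : 1 ≤ X) :
    (∑' k : ℕ, if 2 ≤ k then besselI κ (X / k) else 0) ≤
      4 * Real.sqrt (X / π) * Real.exp (X / 2) :=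
  tsum_ite_le_of_sq_mul_le (fun _ _ => besselI_nonneg (by linarith) (by positivity))
    fun _ hk => sq_mul_besselI_div_le hκ (by linarith) (by exact_mod_cast hk)
end
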